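/- arXiv:1606.03441 — 5 statements merged into one kernel-verified Lean document; each statement's English description precedes it below -/
import Mathlib

section
/- Let α ∈ (0,1) be irrational and let f = 2χ_U − 1 be a mean-zero indicator function (U a finite union of disjoint intervals with m(U) = 1/2). If the series Σ_{n=1}^∞ f(T^n 0)·(1/n) diverges, where T = R_α, then α is a Liouville number. -/
/-!
If `α` is irrational but not Liouville, then `|α - p / q| ≥ c / q ^ v` for all fractions.
Dirichlet's theorem then provides, at every scale `Q`, a reduced fraction `p / q` with
`q ≤ Q`, `|α - p / q| < 1 / q ^ 2` and `q ^ v ≥ c Q`. Over `q` consecutive steps the orbit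
`x + n α` is a perturbation by less than `1 / q` of the grid `x + n p / q`, so (writing the
indicator of an interval through fractional parts) each of the `B` intervals is visited
`q · length + O(1)` times; as `m(U) = 1 / 2`, every block of `q` consecutive values of
`f (n α)` sums to `O(B)`. Choosing `Q = ⌊√N⌋` gives partial sums `S_N = O(N ^ (1 - 1 / (2v)))`,
and Abel summation `∑_{n ≤ N} f (n α) / n = S_N / N + ∑_{m < N} S_m / (m (m + 1))` shows that
the series converges.
-/

open MeasureTheory Filter Topology

noncomputable section

def IsArc (I : Set UnitAddCircle) : Prop :=
  ∃ a b : ℝ, I = (fun t : ℝ => (t : UnitAddCircle)) '' Set.Ico a b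

/-- `f = 2·χ_U − 1`, where `U ⊆ S¹` is a union of `B` pairwise disjoint
intervals with Lebesgue measure `m(U) = 1/2`. -/
def IsMeanZeroIndicator (B : ℕ) (f : UnitAddCircle → ℝ) : Prop :=
  ∃ I : Fin B → Set UnitAddCircle,
    (∀ l, IsArc (I l)) ∧
    Pairwise (Function.onFun Disjoint I) ∧
    volume (⋃ l, I l) = 1 / 2 ∧
    f = fun x => 2 * Set.indicator (⋃ l, I l) (fun _ => (1 : ℝ)) x - 1

open Finset

/-! ### Fractional parts along a rational rotation -/

theorem fract_add_intCast_div {q : ℕ} [NeZero q] {w : ℝ} (hw0 : 0 ≤ w) (hw1 : w < 1) (m : ℤ) :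
    Int.fract ((w + m) / q) = (w + (m : ZMod q).val) / q := by
  have hq : (0 : ℝ) < q := Nat.cast_pos.2 (Nat.pos_of_neZero q)
  have hm : (m : ℝ) = (m : ZMod q).val + q * ((m / q : ℤ) : ℝ) := by
    have := Int.emod_add_mul_ediv m q
    rw [← ZMod.val_intCast] at this
    exact_mod_cast this.symm
  have hval : ((m : ZMod q).val : ℝ) + 1 ≤ q := by exact_mod_cast ZMod.val_lt (m : ZMod q)
  rw [hm, show (w + ((m : ZMod q).val + q * ((m / q : ℤ) : ℝ))) / q
      = (w + (m : ZMod q).val) / q + ((m / q : ℤ) : ℝ) by field_simp; ring,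
    Int.fract_add_intCast, Int.fract_eq_self]
  constructor
  · positivity
  · rw [div_lt_one hq]; linarith

theorem fract_add_mul_div {q : ℕ} [NeZero q] (y : ℝ) (p : ℤ) (n : ℕ) :
    Int.fract (y + n * (p / q))
      = (Int.fract (q * y) + ((⌊q * y⌋ + n * p : ℤ) : ZMod q).val) / q := by
  have hq : (q : ℝ) ≠ 0 := Nat.cast_ne_zero.2 (NeZero.ne q)
  rw [← fract_add_intCast_div (Int.fract_nonneg _) (Int.fract_lt_one _)]
  congr 1
  have := Int.fract_add_floor ((q : ℝ) * y)
  rw [eq_div_iff hq, add_mul, mul_assoc, div_mul_cancel₀ _ hq]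
  push_cast
  linear_combination -this

theorem sum_range_natCast_zmod {M : Type*} [AddCommMonoid M] (q : ℕ) [NeZero q] (φ : ZMod q → M) :
    ∑ n ∈ range q, φ n = ∑ k, φ k :=
  sum_bij' (fun n _ => (n : ZMod q)) (fun k _ => k.val) (fun _ _ => mem_univ _)
    (fun k _ => mem_range.2 (ZMod.val_lt k)) (fun _ hn => ZMod.val_cast_of_lt (mem_range.1 hn))
    (fun k _ => ZMod.natCast_zmod_val k) (fun _ _ => rfl)

theorem sum_range_intCast_add_mul {M : Type*} [AddCommMonoid M] {q : ℕ} [NeZero q] {p : ℤ}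
    (hp : IsCoprime p q) (K : ℤ) (φ : ZMod q → M) :
    ∑ n ∈ range q, φ ((K + n * p : ℤ) : ZMod q) = ∑ k, φ k := by
  push_cast
  rw [sum_range_natCast_zmod q (fun k => φ (K + k * p))]
  exact Fintype.sum_equiv ((ZMod.unitOfIsCoprime p hp).mulRight.trans (Equiv.addLeft (K : ZMod q)))
    _ _ fun _ => rfl

theorem sum_range_natCast (q : ℕ) : ∑ j ∈ range q, (j : ℝ) = q * (q - 1) / 2 := by
  induction q with
  | zero => simp
  | succ n ih => rw [sum_range_succ, ih]; push_cast; ring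

theorem sum_fract_add_mul_div {q : ℕ} [NeZero q] {p : ℤ} (hp : IsCoprime p q) (y : ℝ) :
    ∑ n ∈ range q, Int.fract (y + n * (p / q)) = Int.fract (q * y) + (q - 1) / 2 := by
  have hq : (q : ℝ) ≠ 0 := Nat.cast_ne_zero.2 (NeZero.ne q)
  simp_rw [fract_add_mul_div]
  rw [sum_range_intCast_add_mul hp _ (fun k => (Int.fract (q * y) + k.val) / q),
    ← sum_range_natCast_zmod q, ← sum_div, sum_add_distrib, sum_const, card_range, nsmul_eq_mul,
    sum_congr rfl fun j hj => by rw [ZMod.val_cast_of_lt (mem_range.1 hj)], sum_range_natCast]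
  field_simp

theorem fract_add_of_mem_Ico {s e : ℝ} (h : Int.fract s + e ∈ Set.Ico 0 1) :
    Int.fract (s + e) = Int.fract s + e := by
  rw [show s + e = (Int.fract s + e) + ⌊s⌋ by linarith [Int.fract_add_floor s],
    Int.fract_add_intCast, Int.fract_eq_self.2 h]

theorem abs_fract_add_sub_fract_sub_le {s e : ℝ} (he : |e| < 1) :
    |Int.fract (s + e) - Int.fract s - e| ≤ 1 := by
  have hD : Int.fract (s + e) - Int.fract s - e = ((⌊s⌋ - ⌊s + e⌋ : ℤ) : ℝ) := by
    push_cast; unfold Int.fract; ring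
  have hlt : |⌊s⌋ - ⌊s + e⌋| < 2 := by
    rw [← Int.cast_lt (R := ℝ), Int.cast_abs, ← hD, Int.cast_ofNat, abs_lt]
    have := abs_lt.1 he
    constructor <;> linarith [Int.fract_nonneg s, Int.fract_lt_one s,
      Int.fract_nonneg (s + e), Int.fract_lt_one (s + e)]
  rw [hD, ← Int.cast_abs]
  exact_mod_cast (by omega : |⌊s⌋ - ⌊s + e⌋| ≤ 1)

theorem val_add_two_le_of_ne_neg_one {q : ℕ} [NeZero q] {k : ZMod q} (hk : k ≠ -1) :
    k.val + 2 ≤ q := by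
  have hne : k.val + 1 ≠ q := fun h => hk <| eq_neg_of_add_eq_zero_left <| by
    rw [← ZMod.natCast_zmod_val k, ← Nat.cast_add_one, h, ZMod.natCast_self]
  have := ZMod.val_lt k
  omega

theorem add_div_add_mem_Ico {q w e : ℝ} {k : ℕ} (hw : w ∈ Set.Ico 0 1) (hk₁ : 1 ≤ k)
    (hk₂ : k + 2 ≤ q) (he : |e| < 1 / q) : (w + k) / q + e ∈ Set.Ico 0 1 := by
  have hk₁' : (1 : ℝ) ≤ k := by exact_mod_cast hk₁
  have hq : 0 < q := by linarith
  have := abs_lt.1 he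
  constructor
  · have : 1 / q ≤ (w + k) / q := by gcongr; linarith [hw.1]
    linarith
  · have : (w + k) / q < 1 - 1 / q := by
      rw [div_lt_iff₀ hq, sub_mul, one_div_mul_cancel hq.ne']; linarith [hw.2]
    linarith

/-- The points `fract (y + n * (p / q))`, `n < q`, form the grid `(fract (q * y) + k) / q`,
`k < q`; a drift `|n * θ| < 1 / q` moves only the grid points `k = 0` and `k = q - 1` across an
integer. -/
theorem abs_fract_add_mul_sub_le {q : ℕ} [NeZero q] (p : ℤ) {θ : ℝ} (hθ : |θ| < 1 / q ^ 2)
    (y : ℝ) {n : ℕ} (hn : n < q) :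
    |Int.fract (y + n * (p / q + θ)) - Int.fract (y + n * (p / q)) - n * θ|
      ≤ if ((⌊q * y⌋ + n * p : ℤ) : ZMod q) ∈ ({0, -1} : Finset (ZMod q)) then 1 else 0 := by
  have hq : (0 : ℝ) < q := Nat.cast_pos.2 (Nat.pos_of_neZero q)
  have hnθ : |n * θ| < 1 / q := by
    rw [abs_mul, Nat.abs_cast]
    calc (n : ℝ) * |θ| ≤ q * |θ| := by gcongr
      _ < q * (1 / q ^ 2) := by gcongr
      _ = 1 / q := by field_simp
  rw [show y + n * (p / q + θ) = (y + n * (p / q)) + n * θ by ring]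
  split_ifs with hk
  · exact abs_fract_add_sub_fract_sub_le (hnθ.trans_le (div_le_one_of_le₀
      (by exact_mod_cast Nat.one_le_iff_ne_zero.2 (NeZero.ne q)) hq.le))
  simp only [mem_insert, mem_singleton, not_or] at hk
  rw [fract_add_of_mem_Ico, add_sub_cancel_left, sub_self, abs_zero]
  rw [fract_add_mul_div]
  exact add_div_add_mem_Ico ⟨Int.fract_nonneg _, Int.fract_lt_one _⟩ (ZMod.val_pos.2 hk.1)
    (by exact_mod_cast val_add_two_le_of_ne_neg_one hk.2) hnθ

theorem sum_abs_fract_add_mul_sub_le {q : ℕ} [NeZero q] {p : ℤ} (hp : IsCoprime p q) {θ : ℝ}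
    (hθ : |θ| < 1 / q ^ 2) (y : ℝ) :
    ∑ n ∈ range q, |Int.fract (y + n * (p / q + θ)) - Int.fract (y + n * (p / q)) - n * θ| ≤ 2 := by
  let S : Finset (ZMod q) := {0, -1}
  calc _ ≤ ∑ n ∈ range q, if ((⌊q * y⌋ + n * p : ℤ) : ZMod q) ∈ S then (1 : ℝ) else 0 :=
        sum_le_sum fun n hn => abs_fract_add_mul_sub_le p hθ y (mem_range.1 hn)
    _ = ∑ k, if k ∈ S then (1 : ℝ) else 0 :=
        sum_range_intCast_add_mul hp _ fun k => if k ∈ S then (1 : ℝ) else 0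
    _ ≤ 2 := by
        rw [sum_boole]
        exact_mod_cast (card_le_card fun x hx => (mem_filter.1 hx).2).trans card_le_two

theorem abs_sum_fract_add_mul_sub_half_le {q : ℕ} [NeZero q] {p : ℤ} (hp : IsCoprime p q) {θ : ℝ}
    (hθ : |θ| < 1 / q ^ 2) (y : ℝ) :
    |∑ n ∈ range q, Int.fract (y + n * (p / q + θ)) - q / 2| ≤ 3 := by
  have hq : (0 : ℝ) < q := Nat.cast_pos.2 (Nat.pos_of_neZero q)
  set d : ℕ → ℝ := fun n => Int.fract (y + n * (p / q + θ)) - Int.fract (y + n * (p / q)) - n * θ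
  have hsplit : ∑ n ∈ range q, Int.fract (y + n * (p / q + θ)) - q / 2
      = (Int.fract (q * y) - 1 / 2) + θ * ∑ n ∈ range q, (n : ℝ) + ∑ n ∈ range q, d n := by
    simp only [d]
    rw [sum_sub_distrib, sum_sub_distrib, sum_fract_add_mul_div hp, ← sum_mul]
    ring
  have hfract : |Int.fract (q * y) - 1 / 2| ≤ 1 / 2 := abs_le.2
    ⟨by linarith [Int.fract_nonneg ((q : ℝ) * y)], by linarith [Int.fract_lt_one ((q : ℝ) * y)]⟩
  have hdrift : |θ * ∑ n ∈ range q, (n : ℝ)| ≤ 1 / 2 := by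
    have hq1 : (1 : ℝ) ≤ q := by exact_mod_cast Nat.one_le_iff_ne_zero.2 (NeZero.ne q)
    rw [sum_range_natCast, abs_mul, abs_of_nonneg (a := (q : ℝ) * (q - 1) / 2) (by nlinarith)]
    calc |θ| * (q * (q - 1) / 2) ≤ 1 / q ^ 2 * (q ^ 2 / 2) := by gcongr; nlinarith
      _ = 1 / 2 := by field_simp
  have hjumps : |∑ n ∈ range q, d n| ≤ 2 :=
    (abs_sum_le_sum_abs _ _).trans (sum_abs_fract_add_mul_sub_le hp hθ y)
  rw [hsplit]
  linarith [abs_add_three (Int.fract (q * y) - 1 / 2) (θ * ∑ n ∈ range q, (n : ℝ))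
    (∑ n ∈ range q, d n)]

/-! ### Intervals on the circle -/

theorem coe_mem_coe_image_Ico_iff {a b : ℝ} (hb : b ≤ a + 1) (t : ℝ) :
    (t : UnitAddCircle) ∈ ((↑) : ℝ → UnitAddCircle) '' Set.Ico a b ↔ Int.fract (t - a) < b - a := by
  constructor
  · rintro ⟨s, ⟨hs₁, hs₂⟩, hst⟩
    have hcoe : ((Int.fract (t - a) : ℝ) : UnitAddCircle) = ((s - a : ℝ) : UnitAddCircle) := by
      rw [AddCircle.coe_fract, AddCircle.coe_sub, AddCircle.coe_sub, hst]
    rw [AddCircle.coe_eq_coe_iff_of_mem_Ico (a := 0)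
      ⟨Int.fract_nonneg _, by simpa using Int.fract_lt_one _⟩
      ⟨by linarith, by linarith⟩] at hcoe
    linarith
  · intro h
    refine ⟨a + Int.fract (t - a), ⟨by linarith [Int.fract_nonneg (t - a)], by linarith⟩, ?_⟩
    rw [AddCircle.coe_add, AddCircle.coe_fract, AddCircle.coe_sub, add_sub_cancel]

theorem indicator_coe_image_Ico {a b : ℝ} (hab : a ≤ b) (hb : b ≤ a + 1) (t : ℝ) :
    Set.indicator (((↑) : ℝ → UnitAddCircle) '' Set.Ico a b) (fun _ => (1 : ℝ)) t
      = (b - a) + Int.fract (t - b) - Int.fract (t - a) := by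
  have hshift : Int.fract (t - b) = Int.fract (Int.fract (t - a) - (b - a)) := by
    rw [show t - b = (Int.fract (t - a) - (b - a)) + ⌊t - a⌋ by
      linarith [Int.fract_add_floor (t - a)], Int.fract_add_intCast]
  have h₀ := Int.fract_nonneg (t - a)
  have h₁ := Int.fract_lt_one (t - a)
  by_cases h : Int.fract (t - a) < b - a
  · rw [Set.indicator_of_mem ((coe_mem_coe_image_Ico_iff hb t).2 h), hshift,
      ← Int.fract_add_one, Int.fract_eq_self.2 ⟨by linarith, by linarith⟩]
    ring
  · rw [Set.indicator_of_notMem (mt (coe_mem_coe_image_Ico_iff hb t).1 h), hshift,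
      Int.fract_eq_self.2 ⟨by linarith, by linarith⟩]
    ring

theorem measurableSet_coe_image_Ico {a b : ℝ} (hb : b ≤ a + 1) :
    MeasurableSet (((↑) : ℝ → UnitAddCircle) '' Set.Ico a b) :=
  measurableSet_Ico.image_of_continuousOn_injOn (AddCircle.continuous_mk' 1).continuousOn
    fun _ hx _ hy hxy => (AddCircle.coe_eq_coe_iff_of_mem_Ico (a := a)
      ⟨hx.1, by linarith [hx.2]⟩ ⟨hy.1, by linarith [hy.2]⟩).1 hxy

theorem volume_coe_image_Ico {a b : ℝ} (hab : a ≤ b) (hb : b ≤ a + 1) :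
    volume (((↑) : ℝ → UnitAddCircle) '' Set.Ico a b) = ENNReal.ofReal (b - a) := by
  rcases hb.lt_or_eq with hb | rfl
  · rw [AddCircle.add_projection_respects_measure 1 (b - 1) (measurableSet_coe_image_Ico hb.le)]
    have hpre : QuotientAddGroup.mk ⁻¹' (((↑) : ℝ → UnitAddCircle) '' Set.Ico a b)
        ∩ Set.Ioc (b - 1) (b - 1 + 1) = Set.Ico a b := by
      ext x
      constructor
      · rintro ⟨⟨s, hs, hsx⟩, hx⟩
        rwa [← (AddCircle.coe_eq_coe_iff_of_mem_Ioc
          ⟨by linarith [hs.1], by linarith [hs.2]⟩ hx).1 hsx]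
      · intro hx
        exact ⟨⟨x, hx, rfl⟩, by linarith [hx.1], by linarith [hx.2]⟩
    rw [hpre, Real.volume_Ico]
  · rw [AddCircle.coe_image_Ico_eq, AddCircle.measure_univ, add_sub_cancel_left]

theorem IsArc.exists_Ico {I : Set UnitAddCircle} (hI : IsArc I) (hne : I ≠ Set.univ) :
    ∃ a b : ℝ, a ≤ b ∧ b ≤ a + 1 ∧ I = ((↑) : ℝ → UnitAddCircle) '' Set.Ico a b := by
  obtain ⟨a, b, rfl⟩ := hI
  rcases le_or_gt b a with hba | hab
  · exact ⟨a, a, le_rfl, by linarith, by rw [Set.Ico_eq_empty hba.not_gt, Set.Ico_self]⟩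
  refine ⟨a, b, hab.le, not_lt.1 fun h => hne ?_, rfl⟩
  exact Set.eq_univ_of_univ_subset <| (AddCircle.coe_image_Ico_eq 1 a).symm.subset.trans
    (Set.image_mono (Set.Ico_subset_Ico_right h.le))

theorem abs_sum_indicator_coe_image_Ico_sub_le {q : ℕ} [NeZero q] {p : ℤ} (hp : IsCoprime p q)
    {θ : ℝ} (hθ : |θ| < 1 / q ^ 2) {a b : ℝ} (hab : a ≤ b) (hb : b ≤ a + 1) (x : ℝ) :
    |∑ n ∈ range q, Set.indicator (((↑) : ℝ → UnitAddCircle) '' Set.Ico a b) (fun _ => (1 : ℝ))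
        ((x + n * (p / q + θ) : ℝ) : UnitAddCircle) - q * (b - a)| ≤ 6 := by
  set A := ∑ n ∈ range q, Int.fract ((x - b) + n * (p / q + θ))
  set A' := ∑ n ∈ range q, Int.fract ((x - a) + n * (p / q + θ))
  have hsum : ∑ n ∈ range q, Set.indicator (((↑) : ℝ → UnitAddCircle) '' Set.Ico a b)
      (fun _ => (1 : ℝ)) ((x + n * (p / q + θ) : ℝ) : UnitAddCircle) - q * (b - a)
      = (A - q / 2) - (A' - q / 2) := by
    simp_rw [indicator_coe_image_Ico hab hb, add_sub_right_comm x, sum_sub_distrib, sum_add_distrib]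
    rw [sum_const, card_range, nsmul_eq_mul]
    ring
  rw [hsum]
  linarith [abs_sub (A - q / 2) (A' - q / 2), abs_sum_fract_add_mul_sub_half_le hp hθ (x - b),
    abs_sum_fract_add_mul_sub_half_le hp hθ (x - a)]

theorem IsMeanZeroIndicator.abs_le_one {B : ℕ} {f : UnitAddCircle → ℝ}
    (hf : IsMeanZeroIndicator B f) (x : UnitAddCircle) : |f x| ≤ 1 := by
  obtain ⟨I, -, -, -, rfl⟩ := hf
  by_cases hx : x ∈ ⋃ l, I l <;> norm_num [hx]

theorem IsMeanZeroIndicator.exists_Ico {B : ℕ} {f : UnitAddCircle → ℝ}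
    (hf : IsMeanZeroIndicator B f) :
    ∃ a b : Fin B → ℝ, (∀ l, a l ≤ b l ∧ b l ≤ a l + 1) ∧ ∑ l, (b l - a l) = 1 / 2 ∧
      ∀ t : ℝ, f t = 2 * ∑ l, Set.indicator (((↑) : ℝ → UnitAddCircle) '' Set.Ico (a l) (b l))
        (fun _ => (1 : ℝ)) t - 1 := by
  obtain ⟨I, harc, hdisj, hvol, rfl⟩ := hf
  have hne : ∀ l, I l ≠ Set.univ := fun l h => by
    have := measure_mono (μ := volume) (Set.subset_iUnion I l)
    rw [h, hvol, AddCircle.measure_univ] at this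
    norm_num at this
  choose a b hab hb hI using fun l => (harc l).exists_Ico (hne l)
  obtain rfl : I = fun l => ((↑) : ℝ → UnitAddCircle) '' Set.Ico (a l) (b l) := funext hI
  refine ⟨a, b, fun l => ⟨hab l, hb l⟩, ?_, fun t => ?_⟩
  · have hsum := measure_iUnion (μ := volume) hdisj fun l => measurableSet_coe_image_Ico (hb l)
    rw [hvol, tsum_fintype] at hsum
    simp_rw [volume_coe_image_Ico (hab _) (hb _)] at hsum
    rw [← ENNReal.ofReal_sum_of_nonneg fun l _ => sub_nonneg.2 (hab l)] at hsum
    rw [← ENNReal.toReal_ofReal (sum_nonneg fun l _ => sub_nonneg.2 (hab l)), ← hsum]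
    norm_num
  · rw [← Finset.indicator_biUnion_apply _ _ (hdisj.set_pairwise _)]
    simp

theorem IsMeanZeroIndicator.abs_sum_le {B : ℕ} {f : UnitAddCircle → ℝ}
    (hf : IsMeanZeroIndicator B f) {q : ℕ} [NeZero q] {p : ℤ} (hp : IsCoprime p q) {θ : ℝ}
    (hθ : |θ| < 1 / q ^ 2) (x : ℝ) :
    |∑ n ∈ range q, f ((x + n * (p / q + θ) : ℝ) : UnitAddCircle)| ≤ 12 * B := by
  obtain ⟨a, b, hab, hlen, hf⟩ := hf.exists_Ico
  set E : Fin B → ℝ := fun l => ∑ n ∈ range q, Set.indicator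
    (((↑) : ℝ → UnitAddCircle) '' Set.Ico (a l) (b l)) (fun _ => (1 : ℝ))
      ((x + n * (p / q + θ) : ℝ) : UnitAddCircle) - q * (b l - a l)
  have hsum : ∑ n ∈ range q, f ((x + n * (p / q + θ) : ℝ) : UnitAddCircle) = 2 * ∑ l, E l := by
    simp only [hf, E, sum_sub_distrib, ← mul_sum, sum_const, card_range, nsmul_eq_mul, hlen]
    rw [sum_comm]
    ring
  have hE : ∀ l, |E l| ≤ 6 := fun l =>
    abs_sum_indicator_coe_image_Ico_sub_le hp hθ (hab l).1 (hab l).2 x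
  calc |∑ n ∈ range q, f ((x + n * (p / q + θ) : ℝ) : UnitAddCircle)|
      = 2 * |∑ l, E l| := by rw [hsum, abs_mul, abs_two]
    _ ≤ 2 * ∑ l : Fin B, (6 : ℝ) := by
        gcongr
        exact (abs_sum_le_sum_abs _ _).trans (sum_le_sum fun l _ => hE l)
    _ = 12 * B := by
        rw [sum_const, card_univ, Fintype.card_fin, nsmul_eq_mul]
        ring

/-! ### Diophantine approximation -/

theorem exists_le_abs_sub_div_pow_of_not_liouville {α : ℝ} (hirr : Irrational α)
    (hL : ¬ Liouville α) :
    ∃ v : ℕ, 0 < v ∧ ∃ c : ℝ, 0 < c ∧ c ≤ 1 ∧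
      ∀ (p : ℤ) (q : ℕ), 0 < q → c / q ^ v ≤ |α - p / q| := by
  simp only [Liouville, not_forall, not_exists, not_and, not_lt] at hL
  obtain ⟨n, hn⟩ := hL
  have hfract : 0 < Int.fract α := Int.fract_pos.2 (hirr.ne_int ⌊α⌋)
  set c := min 1 (min (Int.fract α) (1 - Int.fract α))
  refine ⟨n + 1, n.succ_pos, c, lt_min one_pos (lt_min hfract (by linarith [Int.fract_lt_one α])),
    min_le_left _ _, fun p q hq => ?_⟩
  rcases (Nat.one_le_iff_ne_zero.2 hq.ne').eq_or_lt with rfl | hq1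
  · rw [Nat.cast_one, one_pow, div_one, div_one]
    have := Int.fract_add_floor α
    rcases le_or_gt p ⌊α⌋ with hp | hp
    · have : (p : ℝ) ≤ ⌊α⌋ := by exact_mod_cast hp
      calc c ≤ Int.fract α := (min_le_right _ _).trans (min_le_left _ _)
        _ ≤ |α - p| := by rw [abs_of_nonneg (by linarith)]; linarith
    · have : (⌊α⌋ : ℝ) + 1 ≤ p := by exact_mod_cast hp
      calc c ≤ 1 - Int.fract α := (min_le_right _ _).trans (min_le_right _ _)
        _ ≤ |α - p| := by rw [abs_of_neg (by linarith [Int.fract_lt_one α])]; linarith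
  · have hq1' : (1 : ℝ) ≤ q := by exact_mod_cast hq1.le
    calc c / q ^ (n + 1) ≤ 1 / q ^ n := by
          gcongr
          · exact min_le_left _ _
          · exact n.le_succ
      _ ≤ |α - p / q| := by
          have hne : α ≠ p / q := by simpa using hirr.ne_rat (p / q)
          simpa using hn p q (by exact_mod_cast hq1) (by simpa using hne)

theorem exists_rat_den_le_and_le_den_pow {α c : ℝ} {v : ℕ}
    (hdio : ∀ (p : ℤ) (q : ℕ), 0 < q → c / q ^ v ≤ |α - p / q|) {Q : ℕ} (hQ : 0 < Q) :
    ∃ r : ℚ, r.den ≤ Q ∧ |α - r| < 1 / r.den ^ 2 ∧ c * (Q + 1) ≤ r.den ^ v := by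
  obtain ⟨r, hr, hden⟩ := Real.exists_rat_abs_sub_le_and_den_le α hQ
  have hd : (1 : ℝ) ≤ r.den := by exact_mod_cast r.pos
  have hdQ : (r.den : ℝ) < Q + 1 := by exact_mod_cast Nat.lt_succ_of_le hden
  refine ⟨r, hden, hr.trans_lt ?_, ?_⟩
  · rw [sq]
    gcongr
  · have h := (hdio r.num r.den r.pos).trans (Rat.cast_def (K := ℝ) r ▸ hr)
    rw [div_le_div_iff₀ (by positivity) (by positivity), one_mul] at h
    rcases le_or_gt c 0 with hc | hc
    · exact (mul_nonpos_of_nonpos_of_nonneg hc (by positivity)).trans (by positivity)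
    · nlinarith [mul_le_mul_of_nonneg_left hd (by positivity : (0 : ℝ) ≤ c * (Q + 1))]

/-! ### Partial sums and Abel summation -/

theorem abs_sum_Ioc_le_of_abs_sum_block_le {G : ℕ → ℝ} (hG : ∀ n, |G n| ≤ 1) {q : ℕ} (hq : 0 < q)
    {K : ℝ} (hK : 0 ≤ K) (hblock : ∀ m, |∑ n ∈ Ioc m (m + q), G n| ≤ K) (N : ℕ) :
    |∑ n ∈ Ioc 0 N, G n| ≤ K * (N / q) + q := by
  have hsplit : ∀ k r : ℕ, |∑ n ∈ Ioc 0 (k * q + r), G n| ≤ k * K + r := by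
    intro k r
    induction k with
    | zero =>
      simp only [zero_mul, zero_add, CharP.cast_eq_zero]
      refine (abs_sum_le_sum_abs _ _).trans ((sum_le_sum fun n _ => hG n).trans ?_)
      simp
    | succ k ih =>
      rw [show (k + 1) * q + r = k * q + r + q by ring,
        ← sum_Ioc_consecutive _ (Nat.zero_le _) (Nat.le_add_right _ q)]
      push_cast
      linarith [hblock (k * q + r), abs_add_le (∑ n ∈ Ioc 0 (k * q + r), G n)
        (∑ n ∈ Ioc (k * q + r) (k * q + r + q), G n)]
  calc |∑ n ∈ Ioc 0 N, G n| ≤ (N / q : ℕ) * K + (N % q : ℕ) := by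
        simpa only [Nat.div_add_mod'] using hsplit (N / q) (N % q)
    _ ≤ K * (N / q) + q := by
        have h1 : ((N / q : ℕ) : ℝ) ≤ N / q := Nat.cast_div_le
        have h2 : ((N % q : ℕ) : ℝ) ≤ q := by exact_mod_cast (Nat.mod_lt N hq).le
        nlinarith

theorem rpow_one_div_two_mul_le {x y c : ℝ} {v : ℕ} (hv : v ≠ 0) (hx : 0 ≤ x) (hy : 0 ≤ y)
    (hc : 0 < c) (hc1 : c ≤ 1) (h : c * √x ≤ y ^ v) : x ^ (1 / (2 * v : ℝ)) ≤ y / c := by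
  refine le_of_pow_le_pow_left₀ hv (by positivity) ?_
  calc (x ^ (1 / (2 * v : ℝ))) ^ v = √x := by
        rw [← Real.rpow_natCast, ← Real.rpow_mul hx, Real.sqrt_eq_rpow]
        congr 1
        field_simp
    _ ≤ y ^ v / c := by rw [le_div_iff₀ hc]; linarith
    _ ≤ y ^ v / c ^ v := by gcongr; exact pow_le_of_le_one hc.le hc1 hv
    _ = (y / c) ^ v := (div_pow y c v).symm

theorem abs_sum_Ioc_le_rpow {G : ℕ → ℝ} (hG : ∀ n, |G n| ≤ 1) {K c : ℝ} {v : ℕ} (hK : 0 ≤ K)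
    (hc : 0 < c) (hc1 : c ≤ 1) (hv : v ≠ 0)
    (hblock : ∀ Q : ℕ, 0 < Q → ∃ q : ℕ, 0 < q ∧ q ≤ Q ∧ c * (Q + 1) ≤ q ^ v ∧
      ∀ m, |∑ n ∈ Ioc m (m + q), G n| ≤ K) (N : ℕ) :
    |∑ n ∈ Ioc 0 N, G n| ≤ (K / c + 1) * N ^ (1 - 1 / (2 * v : ℝ)) := by
  rcases N.eq_zero_or_pos with rfl | hN
  · simp only [Ioc_self, sum_empty, abs_zero]
    positivity
  set δ : ℝ := 1 / (2 * v)
  have hδ : δ ≤ 1 / 2 := by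
    have : (1 : ℝ) ≤ v := by exact_mod_cast Nat.one_le_iff_ne_zero.2 hv
    exact div_le_div_of_nonneg_left zero_le_one two_pos (by linarith)
  -- `Q = ⌊√N⌋` balances the `N / q` full blocks against the incomplete one of length `< q`
  obtain ⟨q, hq, hqQ, hqv, hqK⟩ := hblock N.sqrt (Nat.sqrt_pos.2 hN)
  have hN' : (1 : ℝ) ≤ N := by exact_mod_cast hN
  have hq' : (0 : ℝ) < q := by exact_mod_cast hq
  have hq_le : (q : ℝ) ≤ √N := by
    rw [Real.le_sqrt hq'.le (by positivity), sq]
    exact_mod_cast (Nat.mul_le_mul hqQ hqQ).trans (Nat.sqrt_le N)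
  have hsqrt : √N ≤ N.sqrt + 1 := by
    rw [Real.sqrt_le_left (by positivity), sq]
    exact_mod_cast (Nat.lt_succ_sqrt N).le
  have hNδ : (N : ℝ) ^ δ ≤ q / c := rpow_one_div_two_mul_le hv (by positivity) hq'.le hc hc1
    ((mul_le_mul_of_nonneg_left hsqrt hc.le).trans hqv)
  have hsplit : (N : ℝ) = N ^ (1 - δ) * N ^ δ := by
    rw [← Real.rpow_add (by positivity), sub_add_cancel, Real.rpow_one]
  have hdiv : (N : ℝ) / q ≤ N ^ (1 - δ) / c := by
    calc (N : ℝ) / q = N ^ (1 - δ) * N ^ δ / q := by rw [← hsplit]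
      _ ≤ N ^ (1 - δ) * (q / c) / q := by gcongr
      _ = N ^ (1 - δ) / c := by field_simp
  have hq_rpow : (q : ℝ) ≤ N ^ (1 - δ) := hq_le.trans <| by
    rw [Real.sqrt_eq_rpow]
    exact Real.rpow_le_rpow_of_exponent_le hN' (by linarith)
  calc |∑ n ∈ Ioc 0 N, G n| ≤ K * (N / q) + q := abs_sum_Ioc_le_of_abs_sum_block_le hG hq hK hqK N
    _ ≤ K * (N ^ (1 - δ) / c) + N ^ (1 - δ) := by gcongr
    _ = (K / c + 1) * N ^ (1 - δ) := by ring

theorem sum_Ioc_div_eq (G : ℕ → ℝ) (N : ℕ) :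
    ∑ n ∈ Ioc 0 N, G n / n
      = (∑ n ∈ Ioc 0 N, G n) / N + ∑ m ∈ range N, (∑ n ∈ Ioc 0 m, G n) / (m * (m + 1)) := by
  induction N with
  | zero => simp
  | succ N ih =>
    rw [sum_Ioc_succ_top (Nat.zero_le N), ih, sum_Ioc_succ_top (Nat.zero_le N), sum_range_succ]
    rcases N.eq_zero_or_pos with rfl | hN
    · simp
    have : (N : ℝ) ≠ 0 := by positivity
    push_cast
    field_simp
    ring

theorem exists_tendsto_sum_Ioc_div {G : ℕ → ℝ} {C δ : ℝ} (hδ : 0 < δ)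
    (h : ∀ N : ℕ, |∑ n ∈ Ioc 0 N, G n| ≤ C * N ^ (1 - δ)) :
    ∃ L, Tendsto (fun N => ∑ n ∈ Ioc 0 N, G n / n) atTop (𝓝 L) := by
  set S : ℕ → ℝ := fun N => ∑ n ∈ Ioc 0 N, G n
  have hC : 0 ≤ C := by simpa using (abs_nonneg _).trans (h 1)
  have hsummable : Summable fun m : ℕ => S m / (m * (m + 1)) := by
    refine .of_norm_bounded
      ((Real.summable_one_div_nat_rpow.2 (by linarith : 1 < 1 + δ)).mul_left C) fun m => ?_
    rcases m.eq_zero_or_pos with rfl | hm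
    · simp only [CharP.cast_eq_zero, zero_mul, div_zero, norm_zero]
      positivity
    have hm' : (0 : ℝ) < m := by exact_mod_cast hm
    have hpow : (m : ℝ) ^ (1 - δ) * m ^ (1 + δ) = m * m := by
      rw [← Real.rpow_add hm', show 1 - δ + (1 + δ) = ((2 : ℕ) : ℝ) by push_cast; ring,
        Real.rpow_natCast, sq]
    rw [Real.norm_eq_abs, abs_div, abs_of_pos (a := (m : ℝ) * (m + 1)) (by positivity)]
    calc |S m| / (m * (m + 1)) ≤ C * m ^ (1 - δ) / (m * m) := by gcongr; exacts [h m, by linarith]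
      _ = C * (1 / m ^ (1 + δ)) := by
          rw [← hpow]
          field_simp
  have hdiv : Tendsto (fun N : ℕ => S N / N) atTop (𝓝 0) := by
    have hlim : Tendsto (fun N : ℕ => C * (N : ℝ) ^ (-δ)) atTop (𝓝 0) := by
      simpa using ((tendsto_rpow_neg_atTop hδ).comp tendsto_natCast_atTop_atTop).const_mul C
    refine squeeze_zero_norm (fun N => ?_) hlim
    rcases N.eq_zero_or_pos with rfl | hN
    · simp only [CharP.cast_eq_zero, div_zero, norm_zero]
      positivity
    have hN' : (0 : ℝ) < N := by exact_mod_cast hN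
    rw [Real.norm_eq_abs, abs_div, Nat.abs_cast, div_le_iff₀ hN', mul_assoc,
      ← Real.rpow_add_one hN'.ne', neg_add_eq_sub]
    exact h N
  exact ⟨_, (hdiv.add hsummable.hasSum.tendsto_sum_nat).congr fun N => (sum_Ioc_div_eq G N).symm⟩

theorem sum_Ioc_nsmul_eq_sum_range (g : UnitAddCircle → ℝ) (α : ℝ) (m q : ℕ) :
    ∑ n ∈ Ioc m (m + q), g (n • (α : UnitAddCircle))
      = ∑ j ∈ range q, g (((m + 1) * α + j * α : ℝ) : UnitAddCircle) := by
  rw [← Ico_add_one_add_one_eq_Ioc, sum_Ico_eq_sum_range, add_right_comm, Nat.add_sub_cancel_left]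
  refine sum_congr rfl fun j _ => ?_
  rw [← add_mul, ← Nat.cast_add_one, ← Nat.cast_add, ← nsmul_eq_mul, AddCircle.coe_nsmul]

theorem divergent_alpha_is_liouville_general (α : ℝ)
    (hirr : Irrational α)
    (f : UnitAddCircle → ℝ) (hf : ∃ B : ℕ, IsMeanZeroIndicator B f)
    (hdiv : ¬ ∃ L : ℝ,
      Tendsto (fun N : ℕ => ∑ n ∈ Finset.Icc 1 N,
          f ((0 : UnitAddCircle) + n • (α : UnitAddCircle)) * (1 / (n : ℝ)))
        atTop (𝓝 L)) :
    Liouville α := by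
  by_contra hL
  obtain ⟨B, hf⟩ := hf
  obtain ⟨v, hv, c, hc, hc1, hdio⟩ := exists_le_abs_sub_div_pow_of_not_liouville hirr hL
  have hblock : ∀ Q : ℕ, 0 < Q → ∃ q : ℕ, 0 < q ∧ q ≤ Q ∧ c * (Q + 1) ≤ q ^ v ∧
      ∀ m, |∑ n ∈ Ioc m (m + q), f (n • (α : UnitAddCircle))| ≤ 12 * B := by
    intro Q hQ
    obtain ⟨r, hden, hθ, hpow⟩ := exists_rat_den_le_and_le_den_pow hdio hQ
    have : NeZero r.den := ⟨r.den_nz⟩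
    refine ⟨r.den, r.pos, hden, hpow, fun m => ?_⟩
    have := hf.abs_sum_le (Int.isCoprime_iff_gcd_eq_one.2 r.reduced) hθ ((m + 1) * α)
    rwa [← Rat.cast_def, add_sub_cancel, ← sum_Ioc_nsmul_eq_sum_range] at this
  obtain ⟨L, hL⟩ := exists_tendsto_sum_Ioc_div (by positivity)
    (abs_sum_Ioc_le_rpow (fun n => hf.abs_le_one _) (by positivity) hc hc1 hv.ne' hblock)
  refine hdiv ⟨L, hL.congr fun N => ?_⟩
  rw [← Icc_add_one_left_eq_Ioc]
  simp only [zero_add, mul_one_div]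

/-- **Theorem 2.** If `α ∈ (0,1)` is irrational and the series `Σ f(T^n 0)·(1/n)`
diverges for some mean-zero indicator function `f`, then `α` is Liouville. -/
theorem divergent_alpha_is_liouville (α : ℝ) (hα : α ∈ Set.Ioo (0 : ℝ) 1)
    (hirr : Irrational α)
    (f : UnitAddCircle → ℝ) (hf : ∃ B : ℕ, IsMeanZeroIndicator B f)
    (hdiv : ¬ ∃ L : ℝ,
      Tendsto (fun N : ℕ => ∑ n ∈ Finset.Icc 1 N,
          f ((0 : UnitAddCircle) + n • (α : UnitAddCircle)) * (1 / (n : ℝ)))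
        atTop (𝓝 L)) :
    Liouville α :=
  divergent_alpha_is_liouville_general α hirr f hf hdiv
end
end

section
/- Let α ∈ (0,1) be irrational with continued fraction expansion [a_1 a_2 …] and convergent denominators q_n, let f = 2χ_U − 1 be a mean-zero indicator function where U is a union of B disjoint intervals, let x ∈ S¹, and fix n ≥ 2. For l = 1, …, a_{n+1}, let σ_l be the orbit segment 𝒪_α[q_{n−1} + (l−1)q_n + 1, q_{n−1} + l q_n], and let s(σ_l) = Σ_i f(T^i x) over that range of indices. Then the set C = {l ∈ [1, a_{n+1} − 1] : s(σ_l) ≠ s(σ_{l+1})} has cardinality |C| ≤ 2B. -/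
open MeasureTheory Filter Topology

noncomputable section

/-!
Replacing `σ_l` by `σ_{l+1}` moves every orbit point `T^i x` by `δ = q_n α - p_n` (mod 1), so
`s(σ_l) ≠ s(σ_{l+1})` forces some `T^i x ∈ σ_l` whose displacement arc from `T^i x` to
`T^i x + δ` contains one of the `2B` endpoints of `U`. Each endpoint is caught by at most one
index `i`: two indices `i ≠ i'` catching the same endpoint give `‖(i - i') α‖ < |δ|`, while all
indices lie in a window of length `a_{n+1} q_n ≤ q_{n+1}`, contradicting the best approximation
property of `q_n`.
-/

theorem abs_le_abs_add_of_mul_nonneg {R : Type*} [CommRing R] [LinearOrder R]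
    [IsStrictOrderedRing R] {a b : R} (h : 0 ≤ a * b) : |b| ≤ |a + b| := by
  rw [← sq_le_sq]
  nlinarith [sq_nonneg a]

theorem abs_sub_sub_intCast_lt_of_mem_uIoc {y y' d e : ℝ} {k k' : ℤ}
    (h : e + k ∈ Set.uIoc y (y + d)) (h' : e + k' ∈ Set.uIoc y' (y' + d)) :
    |y' - y - ((k' - k : ℤ) : ℝ)| < |d| := by
  rw [Set.mem_uIoc] at h h'
  push_cast
  rcases h with h | h <;> rcases h' with h' | h' <;> rcases abs_cases d with hd | hd <;>
    rw [hd.1, abs_sub_lt_iff] <;> constructor <;> linarith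

namespace GenContFract

section Integrality

variable {K : Type*} [Field K] [LinearOrder K] [FloorRing K]

theorem exists_int_eq_contsAux (v : K) (n : ℕ) :
    ∃ a b : ℤ, (GenContFract.of v).contsAux n = ⟨a, b⟩ := by
  induction n using Nat.twoStepInduction with
  | zero => exact ⟨1, 0, by simp [contsAux]⟩
  | one => exact ⟨⌊v⌋, 1, by simp [contsAux, of_h_eq_floor]⟩
  | more n ih₀ ih₁ =>
    obtain ⟨a₀, b₀, h₀⟩ := ih₀
    obtain ⟨a₁, b₁, h₁⟩ := ih₁
    cases hs : (GenContFract.of v).s.get? n with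
    | none => exact ⟨a₁, b₁, (contsAux_stable_step_of_terminated hs).trans h₁⟩
    | some gp =>
      obtain ⟨z, hz⟩ := exists_int_eq_of_partDen (partDen_eq_s_b hs)
      refine ⟨z * a₁ + a₀, z * b₁ + b₀, ?_⟩
      rw [contsAux_recurrence hs h₀ h₁, of_partNum_eq_one (partNum_eq_s_a hs), hz]
      push_cast [one_mul]
      rfl

theorem exists_int_eq_nums (v : K) (n : ℕ) : ∃ z : ℤ, (GenContFract.of v).nums n = z := by
  obtain ⟨a, b, h⟩ := exists_int_eq_contsAux v (n + 1)
  exact ⟨a, by rw [num_eq_conts_a, nth_cont_eq_succ_nth_contAux, h]⟩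

theorem exists_int_eq_dens (v : K) (n : ℕ) : ∃ z : ℤ, (GenContFract.of v).dens n = z := by
  obtain ⟨a, b, h⟩ := exists_int_eq_contsAux v (n + 1)
  exact ⟨b, by rw [den_eq_conts_b, nth_cont_eq_succ_nth_contAux, h]⟩

theorem one_le_dens [IsStrictOrderedRing K] (v : K) (n : ℕ) : 1 ≤ (GenContFract.of v).dens n := by
  induction n with
  | zero => rw [zeroth_den_eq_one]
  | succ n ih => exact ih.trans of_den_mono

end Integrality

section Irrational

variable {v : ℝ}

theorem not_terminatedAt_of_irrational (hv : Irrational v) (n : ℕ) :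
    ¬(GenContFract.of v).TerminatedAt n := fun h =>
  hv <| by
    obtain ⟨q, hq⟩ := (terminates_iff_rat v).mp ⟨n, h⟩
    exact ⟨q, hq.symm⟩

def approxErr (v : ℝ) (n : ℕ) : ℝ :=
  (GenContFract.of v).dens n * v - (GenContFract.of v).nums n

theorem approxErr_eq_dens_mul (v : ℝ) (n : ℕ) :
    approxErr v n = (GenContFract.of v).dens n * (v - (GenContFract.of v).convs n) := by
  have := (zero_lt_one.trans_le (one_le_dens v n)).ne'
  rw [approxErr, conv_eq_num_div_den]
  field_simp

theorem coe_dens_mul_eq_coe_approxErr (v : ℝ) (n : ℕ) :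
    (((GenContFract.of v).dens n * v : ℝ) : UnitAddCircle) = (approxErr v n : UnitAddCircle) := by
  obtain ⟨p, hp⟩ := exists_int_eq_nums v n
  rw [approxErr, hp, AddCircle.coe_sub, eq_comm, sub_eq_self]
  exact (AddCircle.coe_eq_zero_iff 1).mpr ⟨p, by simp⟩

theorem neg_one_pow_mul_approxErr_pos (hv : Irrational v) (n : ℕ) :
    0 < (-1) ^ n * approxErr v n := by
  have hsucc := not_terminatedAt_of_irrational hv n
  rw [of_terminatedAt_n_iff_succ_nth_intFractPair_stream_eq_none] at hsucc
  obtain ⟨_, hsucc⟩ := Option.ne_none_iff_exists'.mp hsucc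
  obtain ⟨ifp, hstream, hfr, -⟩ := IntFractPair.succ_nth_stream_eq_some_iff.mp hsucc
  have hfr_pos : 0 < ifp.fr :=
    (IntFractPair.nth_stream_fr_nonneg hstream).lt_of_ne (Ne.symm hfr)
  have hB : 0 < ((GenContFract.of v).contsAux (n + 1)).b := by
    rw [← nth_cont_eq_succ_nth_contAux, ← den_eq_conts_b]
    exact zero_lt_one.trans_le (one_le_dens v n)
  have hpB : 0 ≤ ((GenContFract.of v).contsAux n).b := zero_le_of_contsAux_b
  have hsq : ((-1 : ℝ) ^ n) * (-1) ^ n = 1 := by rw [← mul_pow]; norm_num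
  rw [approxErr_eq_dens_mul, sub_convs_eq hstream, if_neg hfr]
  set X := ((GenContFract.of v).contsAux (n + 1)).b *
    (ifp.fr⁻¹ * ((GenContFract.of v).contsAux (n + 1)).b + ((GenContFract.of v).contsAux n).b)
  have hX : 0 < X := by positivity
  have hden := one_le_dens v n
  generalize (-1 : ℝ) ^ n = s at hsq ⊢
  rw [show s * ((GenContFract.of v).dens n * (s / X)) = (GenContFract.of v).dens n / X by
    linear_combination ((GenContFract.of v).dens n / X) * hsq]
  positivity

theorem approxErr_mul_approxErr_succ_neg (hv : Irrational v) (n : ℕ) :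
    approxErr v n * approxErr v (n + 1) < 0 := by
  have h := mul_pos (neg_one_pow_mul_approxErr_pos hv n)
    (neg_one_pow_mul_approxErr_pos hv (n + 1))
  have hsq : ((-1 : ℝ) ^ n) * (-1) ^ (n + 1) = -1 := by
    rw [pow_succ, ← mul_assoc, ← mul_pow]; norm_num
  nlinarith

theorem exists_int_mul_dens_add_mul_dens_eq (hv : Irrational v) (n : ℕ) (m p : ℤ) :
    ∃ x y : ℤ, x * (GenContFract.of v).dens n + y * (GenContFract.of v).dens (n + 1) = m ∧
      m * v - p = x * approxErr v n + y * approxErr v (n + 1) := by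
  obtain ⟨P₀, hP₀⟩ := exists_int_eq_nums v n
  obtain ⟨P₁, hP₁⟩ := exists_int_eq_nums v (n + 1)
  obtain ⟨Q₀, hQ₀⟩ := exists_int_eq_dens v n
  obtain ⟨Q₁, hQ₁⟩ := exists_int_eq_dens v (n + 1)
  have hdet : P₀ * Q₁ - Q₀ * P₁ = (-1) ^ (n + 1) := by
    have := SimpContFract.determinant (s := SimpContFract.of v)
      (not_terminatedAt_of_irrational hv n)
    exact_mod_cast hP₀ ▸ hP₁ ▸ hQ₀ ▸ hQ₁ ▸ this
  set ε : ℤ := (-1) ^ (n + 1)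
  have hε : ε * ε = 1 := by rw [← mul_pow]; norm_num
  -- Inverting the unimodular matrix of the convergents.
  obtain ⟨x, y, hm_eq, hp_eq⟩ : ∃ x y : ℤ, x * Q₀ + y * Q₁ = m ∧ x * P₀ + y * P₁ = p :=
    ⟨ε * (p * Q₁ - m * P₁), ε * (m * P₀ - p * Q₀),
      by linear_combination ε * m * hdet + m * hε, by linear_combination ε * p * hdet + p * hε⟩
  refine ⟨x, y, by rw [hQ₀, hQ₁]; exact_mod_cast hm_eq, ?_⟩
  rw [approxErr, approxErr, hP₀, hP₁, hQ₀, hQ₁, ← hm_eq, ← hp_eq]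
  push_cast
  ring

/-- Lagrange's best approximation property of the denominators `qₙ`. -/
theorem abs_approxErr_le (hv : Irrational v) {n : ℕ} {m p : ℤ} (hm : m ≠ 0)
    (hlt : |(m : ℝ)| < (GenContFract.of v).dens (n + 1)) :
    |approxErr v n| ≤ |m * v - p| := by
  obtain ⟨x, y, hm_eq, hsplit⟩ := exists_int_mul_dens_add_mul_dens_eq hv n m p
  have hq₀ : 0 ≤ (GenContFract.of v).dens n := zero_le_of_den
  have hq₁ := one_le_dens v (n + 1)
  obtain ⟨hx, hsign⟩ : x ≠ 0 ∧ 0 ≤ (x * approxErr v n) * (y * approxErr v (n + 1)) := by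
    rcases eq_or_ne y 0 with rfl | hy
    · refine ⟨?_, by simp⟩
      rintro rfl
      simp only [Int.cast_zero, zero_mul, add_zero] at hm_eq
      exact hm (by exact_mod_cast hm_eq.symm)
    · -- `x` and `y` have opposite signs, otherwise `|m| ≥ qₙ₊₁`.
      have hxy : x * y < 0 := by
        by_contra! h
        have := abs_le_abs_add_of_mul_nonneg (a := x * (GenContFract.of v).dens n)
          (b := y * (GenContFract.of v).dens (n + 1))
          (by rw [mul_mul_mul_comm]; exact mul_nonneg (by exact_mod_cast h) (by positivity))
        rw [hm_eq, abs_mul, abs_of_pos (zero_lt_one.trans_le hq₁)] at this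
        have : (1 : ℝ) ≤ |(y : ℝ)| := by exact_mod_cast Int.one_le_abs hy
        nlinarith
      refine ⟨left_ne_zero_of_mul hxy.ne, ?_⟩
      rw [mul_mul_mul_comm]
      exact (mul_pos_of_neg_of_neg (by exact_mod_cast hxy)
        (approxErr_mul_approxErr_succ_neg hv n)).le
  calc |approxErr v n| ≤ |(x : ℝ)| * |approxErr v n| :=
        le_mul_of_one_le_left (abs_nonneg _) (by exact_mod_cast Int.one_le_abs hx)
    _ = |x * approxErr v n| := (abs_mul _ _).symm
    _ ≤ |y * approxErr v (n + 1) + x * approxErr v n| :=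
        abs_le_abs_add_of_mul_nonneg (by linarith)
    _ = |m * v - p| := by rw [hsplit, add_comm]

theorem eq_of_add_intCast_mem_uIoc_approxErr (hv : Irrational v) {n i i' : ℕ} {ξ e : ℝ}
    {k k' : ℤ} (hlt : |((i' - i : ℤ) : ℝ)| < (GenContFract.of v).dens (n + 1))
    (hk : e + k ∈ Set.uIoc (ξ + i * v) (ξ + i * v + approxErr v n))
    (hk' : e + k' ∈ Set.uIoc (ξ + i' * v) (ξ + i' * v + approxErr v n)) :
    i = i' := by
  by_contra hne
  have hfar := abs_approxErr_le hv (m := i' - i) (p := k' - k) (by omega) hlt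
  have hnear := abs_sub_sub_intCast_lt_of_mem_uIoc hk hk'
  rw [show ξ + i' * v - (ξ + i * v) = ((i' - i : ℤ) : ℝ) * v by push_cast; ring] at hnear
  linarith

end Irrational

end GenContFract

namespace UnitAddCircle

theorem coe_eq_coe_iff {s t : ℝ} : (s : UnitAddCircle) = t ↔ ∃ k : ℤ, t = s + k := by
  rw [QuotientAddGroup.eq, AddSubgroup.mem_zmultiples_iff]
  simp only [zsmul_eq_mul, mul_one]
  exact exists_congr fun k => by constructor <;> intro h <;> linarith

theorem coe_add_nsmul (ξ α : ℝ) (i : ℕ) :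
    (ξ : UnitAddCircle) + i • (α : UnitAddCircle) = ((ξ + i * α : ℝ) : UnitAddCircle) := by
  rw [← AddCircle.coe_nsmul, ← AddCircle.coe_add, nsmul_eq_mul]

theorem coe_mem_image_coe_iff {t : ℝ} {s : Set ℝ} :
    (t : UnitAddCircle) ∈ (fun r : ℝ => (r : UnitAddCircle)) '' s ↔ ∃ k : ℤ, t + k ∈ s := by
  constructor
  · rintro ⟨r, hr, hrt⟩
    obtain ⟨k, rfl⟩ := coe_eq_coe_iff.mp hrt.symm
    exact ⟨k, hr⟩
  · rintro ⟨k, hk⟩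
    exact ⟨t + k, hk, (coe_eq_coe_iff.mpr ⟨k, rfl⟩).symm⟩

theorem exists_int_add_mem_uIoc_of_not_mem_iff {a b y y' : ℝ}
    (h : ¬((y : UnitAddCircle) ∈ (fun r : ℝ => (r : UnitAddCircle)) '' Set.Ico a b ↔
      (y' : UnitAddCircle) ∈ (fun r : ℝ => (r : UnitAddCircle)) '' Set.Ico a b)) :
    ∃ k : ℤ, a + k ∈ Set.uIoc y y' ∨ b + k ∈ Set.uIoc y y' := by
  wlog hle : y ≤ y' generalizing y y'
  · obtain ⟨k, hk⟩ := this (fun h' => h h'.symm) (le_of_not_ge hle)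
    exact ⟨k, by rwa [Set.uIoc_comm y y']⟩
  rw [Set.uIoc_of_le hle]
  by_contra! hout
  apply h
  rw [coe_mem_image_coe_iff, coe_mem_image_coe_iff]
  constructor
  · rintro ⟨k, hak, hkb⟩
    refine ⟨k, by linarith, lt_of_not_ge fun hb => (hout (-k)).2 ⟨?_, ?_⟩⟩ <;>
      push_cast <;> linarith
  · rintro ⟨k, hak, hkb⟩
    refine ⟨k, le_of_not_gt fun ha => (hout (-k)).1 ⟨?_, ?_⟩, by linarith⟩ <;>
      push_cast <;> linarith

theorem exists_endpoint_add_mem_uIoc_of_indicator_ne {ι : Type*} {I : ι → Set UnitAddCircle}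
    {a b : ι → ℝ} (hI : ∀ i, I i = (fun r : ℝ => (r : UnitAddCircle)) '' Set.Ico (a i) (b i))
    {y y' : ℝ} (h : (⋃ i, I i).indicator (fun _ => (1 : ℝ)) y ≠
      (⋃ i, I i).indicator (fun _ => (1 : ℝ)) y') :
    ∃ (e : ι ⊕ ι) (k : ℤ), Sum.elim a b e + k ∈ Set.uIoc y y' := by
  obtain ⟨i, hi⟩ : ∃ i, ¬((y : UnitAddCircle) ∈ I i ↔ (y' : UnitAddCircle) ∈ I i) := by
    by_contra! hall
    refine h (Set.indicator_const_eq_indicator_const ?_)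
    simp only [Set.mem_iUnion]
    exact exists_congr hall
  rw [hI] at hi
  obtain ⟨k, hk | hk⟩ := exists_int_add_mem_uIoc_of_not_mem_iff hi
  · exact ⟨Sum.inl i, k, hk⟩
  · exact ⟨Sum.inr i, k, hk⟩

end UnitAddCircle

theorem Set.ncard_le_natCard_of_leftUnique {ι E : Type*} [Finite E] {S : Set ι}
    (R : ι → E → Prop) (hex : ∀ l ∈ S, ∃ e, R l e)
    (huniq : ∀ l ∈ S, ∀ l' ∈ S, ∀ e, R l e → R l' e → l = l') :
    S.ncard ≤ Nat.card E := by
  choose g hg using hex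
  rw [← Nat.card_coe_set_eq]
  refine Nat.card_le_card_of_injective (fun l : S => g l l.2) fun l l' hll' => Subtype.ext ?_
  have hR' : R l' (g l l.2) := by simpa only [hll'] using hg l' l'.2
  exact huniq _ l.2 _ l'.2 _ (hg l l.2) hR'

theorem Finset.exists_ne_add_of_sum_Icc_ne {M : Type*} [AddCommMonoid M] {g : ℕ → M}
    {a b c : ℕ} (h : ∑ i ∈ Finset.Icc a b, g i ≠ ∑ i ∈ Finset.Icc (a + c) (b + c), g i) :
    ∃ i ∈ Finset.Icc a b, g i ≠ g (i + c) := by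
  by_contra! hall
  rw [← Finset.map_add_right_Icc, Finset.sum_map] at h
  exact h (Finset.sum_congr rfl hall)

section Blocks

variable {c Q : ℕ}

theorem exists_mem_block_ne_add_of_sum_ne {M : Type*} [AddCommMonoid M] {g : ℕ → M} {l : ℕ}
    (hl : 1 ≤ l) (h : ∑ i ∈ Finset.Icc (c + (l - 1) * Q + 1) (c + l * Q), g i ≠
      ∑ i ∈ Finset.Icc (c + l * Q + 1) (c + (l + 1) * Q), g i) :
    ∃ i ∈ Finset.Icc (c + (l - 1) * Q + 1) (c + l * Q), g i ≠ g (i + Q) := by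
  obtain ⟨l, rfl⟩ : ∃ l₀, l = l₀ + 1 := ⟨l - 1, by omega⟩
  refine Finset.exists_ne_add_of_sum_Icc_ne ?_
  rwa [Nat.add_sub_cancel, show c + l * Q + 1 + Q = c + (l + 1) * Q + 1 by ring,
    show c + (l + 1) * Q + Q = c + (l + 1 + 1) * Q by ring]

theorem eq_of_mem_block_of_mem_block {l l' i : ℕ}
    (hi : i ∈ Finset.Icc (c + (l - 1) * Q + 1) (c + l * Q))
    (hi' : i ∈ Finset.Icc (c + (l' - 1) * Q + 1) (c + l' * Q)) : l = l' := by
  rw [Finset.mem_Icc] at hi hi'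
  by_contra hne
  rcases Nat.lt_or_gt_of_ne hne with hlt | hlt <;>
    have := Nat.mul_le_mul_right Q (Nat.le_sub_one_of_lt hlt) <;> omega

theorem abs_sub_lt_of_mem_block_of_mem_block {A l l' i i' : ℕ} (hl : l ≤ A) (hl' : l' ≤ A)
    (hi : i ∈ Finset.Icc (c + (l - 1) * Q + 1) (c + l * Q))
    (hi' : i' ∈ Finset.Icc (c + (l' - 1) * Q + 1) (c + l' * Q)) :
    |(i' - i : ℤ)| < A * Q := by
  have hlQ := Nat.mul_le_mul_right Q hl
  have hl'Q := Nat.mul_le_mul_right Q hl'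
  rw [Finset.mem_Icc] at hi hi'
  rw [abs_lt]
  constructor <;> omega

end Blocks

theorem card_changes_le_general (α : ℝ) (hirr : Irrational α)
    (B : ℕ)
    (f : UnitAddCircle → ℝ) (hf : IsMeanZeroIndicator B f)
    (q : ℕ → ℕ) (hq : ∀ m, (q m : ℝ) = (GenContFract.of α).dens m)
    (x : UnitAddCircle) (n : ℕ)
    (A : ℕ) (hA : (GenContFract.of α).partDens.get? n = some (A : ℝ)) :
    {l : ℕ | 1 ≤ l ∧ l ≤ A - 1 ∧
        (∑ i ∈ Finset.Icc (q (n - 1) + (l - 1) * q n + 1) (q (n - 1) + l * q n),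
            f (x + i • (α : UnitAddCircle))) ≠
        (∑ i ∈ Finset.Icc (q (n - 1) + l * q n + 1) (q (n - 1) + (l + 1) * q n),
            f (x + i • (α : UnitAddCircle)))}.ncard ≤ 2 * B := by
  obtain ⟨I, hI, -, -, rfl⟩ := hf
  choose a b hab using hI
  obtain ⟨ξ, rfl⟩ := QuotientAddGroup.mk_surjective x
  set δ := GenContFract.approxErr α n
  have hstep (i : ℕ) : (ξ : UnitAddCircle) + (i + q n) • (α : UnitAddCircle) =
      ((ξ + i * α + δ : ℝ) : UnitAddCircle) := by
    rw [add_nsmul, ← add_assoc, UnitAddCircle.coe_add_nsmul, ← AddCircle.coe_nsmul, nsmul_eq_mul,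
      hq, GenContFract.coe_dens_mul_eq_coe_approxErr, ← AddCircle.coe_add]
  have hspan : (A * q n : ℝ) ≤ (GenContFract.of α).dens (n + 1) := by
    rw [hq n]; exact GenContFract.le_of_succ_get?_den hA
  calc _ ≤ Nat.card (Fin B ⊕ Fin B) := Set.ncard_le_natCard_of_leftUnique
        (fun l e => ∃ i ∈ Finset.Icc (q (n - 1) + (l - 1) * q n + 1) (q (n - 1) + l * q n),
          ∃ k : ℤ, Sum.elim a b e + k ∈ Set.uIoc (ξ + i * α) (ξ + i * α + δ)) ?_ ?_
    _ = 2 * B := by simp [two_mul]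
  · rintro l ⟨hl, -, hne⟩
    obtain ⟨i, hi, hfi⟩ := exists_mem_block_ne_add_of_sum_ne hl hne
    rw [hstep, UnitAddCircle.coe_add_nsmul] at hfi
    obtain ⟨e, k, hk⟩ := UnitAddCircle.exists_endpoint_add_mem_uIoc_of_indicator_ne hab
      (y := ξ + i * α) (y' := ξ + i * α + δ) fun h => hfi (by simp only [h])
    exact ⟨e, i, hi, k, hk⟩
  · rintro l ⟨-, hlA, -⟩ l' ⟨-, hlA', -⟩ e ⟨i, hi, k, hk⟩ ⟨i', hi', k', hk'⟩
    have hii' := abs_sub_lt_of_mem_block_of_mem_block (hlA.trans (Nat.sub_le A 1))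
      (hlA'.trans (Nat.sub_le A 1)) hi hi'
    have hlt : |((i' - i : ℤ) : ℝ)| < (GenContFract.of α).dens (n + 1) :=
      lt_of_lt_of_le (by exact_mod_cast hii') hspan
    obtain rfl := GenContFract.eq_of_add_intCast_mem_uIoc_approxErr hirr hlt hk hk'
    exact eq_of_mem_block_of_mem_block hi hi'

/-- **Lemma 3.2.** With `σ_l = 𝒪_α[q_{n−1} + (l−1)q_n + 1, q_{n−1} + l·q_n]`, the set of
`l ∈ [1, a_{n+1} − 1]` at which `s(σ_l)` changes has cardinality at most `2B`. -/
theorem card_changes_le (α : ℝ) (hα : α ∈ Set.Ioo (0 : ℝ) 1) (hirr : Irrational α)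
    (B : ℕ) (hB : 0 < B)
    (f : UnitAddCircle → ℝ) (hf : IsMeanZeroIndicator B f)
    (q : ℕ → ℕ) (hq : ∀ m, (q m : ℝ) = (GenContFract.of α).dens m)
    (x : UnitAddCircle) (n : ℕ) (hn : 2 ≤ n)
    (A : ℕ) (hA : (GenContFract.of α).partDens.get? n = some (A : ℝ)) :
    {l : ℕ | 1 ≤ l ∧ l ≤ A - 1 ∧
        (∑ i ∈ Finset.Icc (q (n - 1) + (l - 1) * q n + 1) (q (n - 1) + l * q n),
            f (x + i • (α : UnitAddCircle))) ≠
        (∑ i ∈ Finset.Icc (q (n - 1) + l * q n + 1) (q (n - 1) + (l + 1) * q n),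
            f (x + i • (α : UnitAddCircle)))}.ncard ≤ 2 * B :=
  card_changes_le_general α hirr B f hf q hq x n A hA
end
end

section
/- Fix real L ≠ 0 and positive integers κ and N_1, and let A > 0. Then there exists a positive integer N* (depending only on L, κ, N_1, and A) with the following property: for every sequence (c_m)_{m≥1} with each c_m ∈ {−1, +1} whose partial sums s_n = Σ_{m=1}^n c_m satisfy s_n/(n+κ) ≥ L/3 for all n > N_1 (in the case L > 0), or satisfy s_n/(n+κ) ≤ L/3 for all n > N_1 (in the case L < 0), one has |Σ_{m=1}^{N*} c_m·(1/(m+κ))| > A. -/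
/-!
Abel summation rewrites `∑_{m ≤ N} c_m/(m+κ)` as `s_N/(N+κ) + ∑_{n<N} s_n/((n+κ)(n+1+κ))`.
For `L > 0` every summand with `n > N₁` is at least `(L/3)/(n+1+κ)`, a divergent harmonic tail,
while the summands with `n ≤ N₁` are bounded below by a constant depending only on `κ`
and `N₁`, since `|s_n| ≤ n`. Neither bound involves the particular sequence, so a single `N*`
works; the case `L < 0` follows by applying this to `-c`.
-/

open Finset Filter

theorem sum_Icc_mul_eq_partialSum_mul_add (c w : ℕ → ℝ) (N : ℕ) :
    ∑ m ∈ Icc 1 N, c m * w m =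
      (∑ m ∈ Icc 1 N, c m) * w N +
        ∑ n ∈ range N, (∑ m ∈ Icc 1 n, c m) * (w n - w (n + 1)) := by
  induction N with
  | zero => simp
  | succ N ih =>
    rw [sum_Icc_succ_top (by omega), sum_Icc_succ_top (by omega), sum_range_succ, ih]
    ring

theorem abs_sum_Icc_le_of_abs_le_one {c : ℕ → ℝ} (hc : ∀ m, 1 ≤ m → |c m| ≤ 1)
    (n : ℕ) :
    |∑ m ∈ Icc 1 n, c m| ≤ n :=
  calc |∑ m ∈ Icc 1 n, c m| ≤ ∑ m ∈ Icc 1 n, |c m| := abs_sum_le_sum_abs _ _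
    _ ≤ #(Icc 1 n) • (1 : ℝ) := sum_le_card_nsmul _ _ _ fun m hm => hc m (mem_Icc.mp hm).1
    _ = n := by simp

theorem tendsto_sum_Ico_one_div_add_atTop (κ N₀ : ℕ) :
    Tendsto (fun N => ∑ n ∈ Ico N₀ N, 1 / ((n : ℝ) + 1 + κ)) atTop atTop := by
  have hdiv : Tendsto (fun N => ∑ n ∈ range N, 1 / ((n : ℝ) + 1 + κ)) atTop atTop := by
    refine (not_summable_iff_tendsto_nat_atTop_of_nonneg fun n => by positivity).mp fun hsum => ?_
    refine Real.not_summable_one_div_natCast ((summable_nat_add_iff (1 + κ)).mp ?_)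
    push_cast
    simpa only [add_assoc] using hsum
  refine (tendsto_atTop_add_const_right _ (-∑ n ∈ range N₀, 1 / ((n : ℝ) + 1 + κ))
    hdiv).congr' ?_
  filter_upwards [eventually_ge_atTop N₀] with N hN
  rw [sum_Ico_eq_sub _ hN, sub_eq_add_neg]

theorem div_add_one_le_mul_one_div_sub {x a s : ℝ} (hx : 0 < x) (h : a ≤ s / x) :
    a / (x + 1) ≤ s * (1 / x - 1 / (x + 1)) := by
  have hsx : a * x ≤ s := (le_div_iff₀ hx).mp h
  have hx1 : 0 < x + 1 := by linarith
  calc a / (x + 1) = a * x / (x * (x + 1)) := by field_simp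
    _ ≤ s / (x * (x + 1)) := by gcongr
    _ = s * (1 / x - 1 / (x + 1)) := by field_simp; ring

theorem exists_lt_sum_Icc_mul_one_div_of_le_partialSum_div (κ N₁ : ℕ) {a : ℝ} (ha : 0 < a)
    (A : ℝ) :
    ∃ N, N₁ < N ∧ ∀ c : ℕ → ℝ, (∀ m, 1 ≤ m → |c m| ≤ 1) →
      (∀ n, N₁ < n → a ≤ (∑ m ∈ Icc 1 n, c m) / ((n : ℝ) + κ)) →
      A < ∑ m ∈ Icc 1 N, c m * (1 / ((m : ℝ) + κ)) := by
  set w : ℕ → ℝ := fun m => 1 / ((m : ℝ) + κ)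
  set B := ∑ n ∈ range (N₁ + 1), (n : ℝ) * |w n - w (n + 1)|
  obtain ⟨N, hN, hN₁N⟩ :=
    (((tendsto_sum_Ico_one_div_add_atTop κ (N₁ + 1)).const_mul_atTop ha).eventually_gt_atTop
      (A + B) |>.and (eventually_gt_atTop N₁)).exists
  refine ⟨N, hN₁N, fun c hc hs => ?_⟩
  have hlast : 0 ≤ (∑ m ∈ Icc 1 N, c m) * w N := by
    rw [mul_one_div]
    exact ha.le.trans (hs N hN₁N)
  have hhead : -B ≤ ∑ n ∈ range (N₁ + 1), (∑ m ∈ Icc 1 n, c m) * (w n - w (n + 1)) := by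
    refine neg_le_of_abs_le ((abs_sum_le_sum_abs _ _).trans (sum_le_sum fun n _ => ?_))
    rw [abs_mul]
    exact mul_le_mul_of_nonneg_right (abs_sum_Icc_le_of_abs_le_one hc n) (abs_nonneg _)
  have htail : a * ∑ n ∈ Ico (N₁ + 1) N, 1 / ((n : ℝ) + 1 + κ) ≤
      ∑ n ∈ Ico (N₁ + 1) N, (∑ m ∈ Icc 1 n, c m) * (w n - w (n + 1)) := by
    rw [mul_sum]
    refine sum_le_sum fun n hn => ?_
    have hn : N₁ < n := (mem_Ico.mp hn).1
    have hpos : (0 : ℝ) < n + κ := by norm_cast; omega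
    simpa only [w, Nat.cast_succ, mul_one_div, add_right_comm]
      using div_add_one_le_mul_one_div_sub hpos (hs n hn)
  rw [sum_Icc_mul_eq_partialSum_mul_add c w N, ← sum_range_add_sum_Ico _ hN₁N]
  linarith

theorem exists_Nstar_uniform_general (L : ℝ) (hL : L ≠ 0) (κ N₁ : ℕ) (A : ℝ) :
    ∃ Nstar : ℕ, 0 < Nstar ∧
      ∀ c : ℕ → ℝ, (∀ m, 1 ≤ m → c m = 1 ∨ c m = -1) →
        ((0 < L → ∀ n, N₁ < n →
            L / 3 ≤ (∑ m ∈ Finset.Icc 1 n, c m) / ((n : ℝ) + (κ : ℝ))) ∧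
         (L < 0 → ∀ n, N₁ < n →
            (∑ m ∈ Finset.Icc 1 n, c m) / ((n : ℝ) + (κ : ℝ)) ≤ L / 3)) →
        A < |∑ m ∈ Finset.Icc 1 Nstar, c m * (1 / ((m : ℝ) + (κ : ℝ)))| := by
  have abs_le_one {c : ℕ → ℝ} (hc : ∀ m, 1 ≤ m → c m = 1 ∨ c m = -1) (m : ℕ)
      (hm : 1 ≤ m) : |c m| ≤ 1 := by
    rcases hc m hm with h | h <;> simp [h]
  rcases hL.lt_or_gt with hneg | hpos
  · obtain ⟨N, hN, H⟩ :=
      exists_lt_sum_Icc_mul_one_div_of_le_partialSum_div κ N₁ (by linarith : 0 < -L / 3) A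
    refine ⟨N, by omega, fun c hc hcond => ?_⟩
    have hneg_c := H (fun m => -c m) (by simpa using abs_le_one hc) fun n hn => by
      simpa [sum_neg_distrib, neg_div] using hcond.2 hneg n hn
    simp only [neg_mul, sum_neg_distrib] at hneg_c
    exact hneg_c.trans_le (neg_le_abs _)
  · obtain ⟨N, hN, H⟩ :=
      exists_lt_sum_Icc_mul_one_div_of_le_partialSum_div κ N₁ (by linarith : 0 < L / 3) A
    exact ⟨N, by omega, fun c hc hcond =>
      (H c (abs_le_one hc) (hcond.1 hpos)).trans_le (le_abs_self _)⟩

/-- **Corollary 3.4.** Given `L ≠ 0`, positive integers `κ, N₁` and `A > 0`, there is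
`N*` (depending only on `L, κ, N₁, A`) such that every `±1`-sequence whose partial sums
satisfy `s_n/(n+κ) ≥ L/3` (if `L > 0`), resp. `≤ L/3` (if `L < 0`), for all `n > N₁`
has `|Σ_{m=1}^{N*} c_m/(m+κ)| > A`. -/
theorem exists_Nstar_uniform (L : ℝ) (hL : L ≠ 0) (κ N₁ : ℕ) (hκ : 0 < κ)
    (hN₁ : 0 < N₁) (A : ℝ) (hA : 0 < A) :
    ∃ Nstar : ℕ, 0 < Nstar ∧
      ∀ c : ℕ → ℝ, (∀ m, 1 ≤ m → c m = 1 ∨ c m = -1) →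
        ((0 < L → ∀ n, N₁ < n →
            L / 3 ≤ (∑ m ∈ Finset.Icc 1 n, c m) / ((n : ℝ) + (κ : ℝ))) ∧
         (L < 0 → ∀ n, N₁ < n →
            (∑ m ∈ Finset.Icc 1 n, c m) / ((n : ℝ) + (κ : ℝ)) ≤ L / 3)) →
        A < |∑ m ∈ Finset.Icc 1 Nstar, c m * (1 / ((m : ℝ) + (κ : ℝ)))| :=
  exists_Nstar_uniform_general L hL κ N₁ A
end

section
/- Let (β_n)_{n≥1} be a real sequence with |β_{n+1}| ≤ |β_n| for all n, |β_n| → 0, and such that for each integer k ≥ 1 exactly one of β_{2k−1}, β_{2k} is positive and the other is negative. Then Σ_{n=1}^∞ β_n converges, |Σ_{n=1}^∞ β_n| ≤ |β_1|, and for every interval of integers [a, b] with 1 ≤ a ≤ b, |Σ_{n=a}^{b} β_n| ≤ 2|β_1|. -/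
/-!
If `β (2k+1)` and `β (2k+2)` have opposite signs and `|β (2k+2)| ≤ |β (2k+1)|`, their sum has
absolute value at most `|β (2k+1)| - |β (2k+2)|`. Peeling such pairs off the left end of a sum
that starts at an odd index `2i+1`, the triangle inequality telescopes against `|β (2k+3)| ≤
|β (2k+2)|` and bounds the sum by `|β (2i+1)|`; a sum starting at an even index `a` costs one more
term, so every block sum starting at `a` is at most `2 |β a|`. These tail bounds tend to `0`, which
makes the partial sums Cauchy.
-/

open Filter Topology Finset

theorem abs_add_le_abs_sub_abs_of_mul_nonpos {α : Type*} [Field α] [LinearOrder α]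
    [IsStrictOrderedRing α] {a b : α} (hab : a * b ≤ 0) (hba : |b| ≤ |a|) :
    |a + b| ≤ |a| - |b| := by
  rcases le_total 0 a with ha | ha <;> rcases le_total 0 b with hb | hb <;>
    simp only [abs_of_nonneg, abs_of_nonpos, *] at hba ⊢ <;>
    rw [abs_le] <;> constructor <;> nlinarith

theorem sum_Icc_eq_add_sum_Icc_add_one {M : Type*} [AddCommMonoid M] (f : ℕ → M) {a b : ℕ}
    (h : a ≤ b) :
    ∑ n ∈ Icc a b, f n = f a + ∑ n ∈ Icc (a + 1) b, f n := by
  rw [Icc_add_one_left_eq_Ioc, add_sum_Ioc_eq_sum_Icc h]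

theorem sum_Icc_one_sub_sum_Icc_one {G : Type*} [AddCommGroup G] (f : ℕ → G) {N n : ℕ}
    (h : N ≤ n) :
    ∑ k ∈ Icc 1 n, f k - ∑ k ∈ Icc 1 N, f k = ∑ k ∈ Icc (N + 1) n, f k := by
  have Icc_one : ∀ m, Icc 1 m = Ioc 0 m := Icc_add_one_left_eq_Ioc 0
  rw [Icc_one, Icc_one, Icc_add_one_left_eq_Ioc, ← sum_Ioc_consecutive f (Nat.zero_le N) h,
    add_sub_cancel_left]

section NearAlternating

variable {β : ℕ → ℝ}

theorem abs_sum_Icc_odd_le (hmono : ∀ n, 1 ≤ n → |β (n + 1)| ≤ |β n|)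
    (hpair : ∀ k, β (2 * k + 1) * β (2 * k + 2) ≤ 0) (i N : ℕ) :
    |∑ n ∈ Icc (2 * i + 1) N, β n| ≤ |β (2 * i + 1)| := by
  rcases lt_trichotomy N (2 * i + 1) with hN | rfl | hN
  · simp [Icc_eq_empty_of_lt hN]
  · simp
  have hsplit : ∑ n ∈ Icc (2 * i + 1) N, β n
      = (β (2 * i + 1) + β (2 * i + 2)) + ∑ n ∈ Icc (2 * (i + 1) + 1) N, β n := by
    rw [sum_Icc_eq_add_sum_Icc_add_one β hN.le, sum_Icc_eq_add_sum_Icc_add_one β hN]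
    exact (add_assoc _ _ _).symm
  have hnext : |β (2 * (i + 1) + 1)| ≤ |β (2 * i + 2)| := hmono (2 * i + 2) (by omega)
  calc |∑ n ∈ Icc (2 * i + 1) N, β n|
      ≤ |β (2 * i + 1) + β (2 * i + 2)| + |∑ n ∈ Icc (2 * (i + 1) + 1) N, β n| := by
        rw [hsplit]; exact abs_add_le _ _
    _ ≤ (|β (2 * i + 1)| - |β (2 * i + 2)|) + |β (2 * (i + 1) + 1)| :=
        add_le_add (abs_add_le_abs_sub_abs_of_mul_nonpos (hpair i) (hmono _ (by omega)))
          (abs_sum_Icc_odd_le hmono hpair (i + 1) N)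
    _ ≤ |β (2 * i + 1)| := by linarith
termination_by N - 2 * i

theorem abs_sum_Icc_le_two_mul (hmono : ∀ n, 1 ≤ n → |β (n + 1)| ≤ |β n|)
    (hpair : ∀ k, β (2 * k + 1) * β (2 * k + 2) ≤ 0) {a : ℕ} (ha : 1 ≤ a) (b : ℕ) :
    |∑ n ∈ Icc a b, β n| ≤ 2 * |β a| := by
  obtain ⟨i, rfl | rfl⟩ := Nat.even_or_odd' a
  · rcases lt_or_ge b (2 * i) with hb | hb
    · simp [Icc_eq_empty_of_lt hb]
    rw [sum_Icc_eq_add_sum_Icc_add_one β hb]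
    calc |β (2 * i) + ∑ n ∈ Icc (2 * i + 1) b, β n|
        ≤ |β (2 * i)| + |β (2 * i + 1)| :=
          (abs_add_le _ _).trans (add_le_add_right (abs_sum_Icc_odd_le hmono hpair i b) _)
      _ ≤ 2 * |β (2 * i)| := by linarith [hmono (2 * i) ha]
  · linarith [abs_sum_Icc_odd_le hmono hpair i b, abs_nonneg (β (2 * i + 1))]

theorem cauchySeq_sum_Icc_one (hmono : ∀ n, 1 ≤ n → |β (n + 1)| ≤ |β n|)
    (hpair : ∀ k, β (2 * k + 1) * β (2 * k + 2) ≤ 0)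
    (hlim : Tendsto (fun n => |β n|) atTop (𝓝 0)) :
    CauchySeq fun N => ∑ n ∈ Icc 1 N, β n := by
  have htail : ∀ N n, N ≤ n →
      dist (∑ k ∈ Icc 1 n, β k) (∑ k ∈ Icc 1 N, β k) ≤ 2 * |β (N + 1)| := fun N n h => by
    rw [Real.dist_eq, sum_Icc_one_sub_sum_Icc_one β h]
    exact abs_sum_Icc_le_two_mul hmono hpair N.succ_pos n
  refine cauchySeq_of_le_tendsto_0 (fun N => 4 * |β (N + 1)|) (fun n m N hn hm => ?_) ?_
  · linarith [dist_triangle_right (∑ k ∈ Icc 1 n, β k) (∑ k ∈ Icc 1 m, β k)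
      (∑ k ∈ Icc 1 N, β k), htail N n hn, htail N m hm]
  · simpa using (hlim.comp (tendsto_add_atTop_nat 1)).const_mul 4

end NearAlternating

/-- **Lemma 4.12.** If `(β_n)_{n≥1}` has nonincreasing absolute values tending to `0`
and each pair `(β_{2k−1}, β_{2k})` contains exactly one positive and one negative term,
then `Σ β_n` converges with `|Σ β_n| ≤ |β_1|`, and every block sum satisfies
`|Σ_{n=a}^b β_n| ≤ 2|β_1|`. -/
theorem near_alternating_sum_bounds (β : ℕ → ℝ)
    (hmono : ∀ n, 1 ≤ n → |β (n + 1)| ≤ |β n|)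
    (hlim : Tendsto (fun n => |β n|) atTop (𝓝 0))
    (halt : ∀ k, 1 ≤ k →
      (0 < β (2 * k - 1) ∧ β (2 * k) < 0) ∨ (β (2 * k - 1) < 0 ∧ 0 < β (2 * k))) :
    (∃ S : ℝ, Tendsto (fun N => ∑ n ∈ Finset.Icc 1 N, β n) atTop (𝓝 S) ∧ |S| ≤ |β 1|) ∧
    ∀ a b : ℕ, 1 ≤ a → a ≤ b → |∑ n ∈ Finset.Icc a b, β n| ≤ 2 * |β 1| := by
  have hpair : ∀ k, β (2 * k + 1) * β (2 * k + 2) ≤ 0 := fun k => by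
    rcases halt (k + 1) k.succ_pos with ⟨h₁, h₂⟩ | ⟨h₁, h₂⟩
    · exact (mul_neg_of_pos_of_neg h₁ h₂).le
    · exact (mul_neg_of_neg_of_pos h₁ h₂).le
  obtain ⟨S, hS⟩ := cauchySeq_tendsto_of_complete (cauchySeq_sum_Icc_one hmono hpair hlim)
  refine ⟨⟨S, hS, le_of_tendsto' hS.abs (abs_sum_Icc_odd_le hmono hpair 0)⟩, fun a b ha _ => ?_⟩
  have hle_one : |β a| ≤ |β 1| :=
    antitoneOn_nat_Ici_of_succ_le (f := fun n => |β n|) hmono (le_refl 1) ha ha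
  linarith [abs_sum_Icc_le_two_mul hmono hpair ha b]
end

section
/- Let α ∈ (0,1) be irrational and not a Liouville number. Then for every mean-zero indicator function f = 2χ_U − 1 (U a finite union of disjoint intervals with m(U) = 1/2) and every x ∈ S¹, the series Σ_{n=1}^∞ f(T^n x)·(1/n) converges, where T = R_α. -/
open MeasureTheory Filter Topology

noncomputable section

open Finset
namespace NLH

lemma fract_add_small (y η : ℝ) (h0 : 0 ≤ Int.fract y + η) (h1 : Int.fract y + η < 1) :
    Int.fract (y + η) = Int.fract y + η := by
  have hy := Int.floor_add_fract y
  have h : y + η = (⌊y⌋ : ℝ) + (Int.fract y + η) := by linarith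
  rw [h, Int.fract_intCast_add, Int.fract_eq_self.2 ⟨h0, h1⟩]

lemma mod_shift_inv {q k a : ℕ} (hk : k < q) (ha : a < q) :
    ((k + a) % q + (q - k)) % q = a := by
  rw [Nat.mod_add_mod]
  have h : k + a + (q - k) = a + q := by omega
  rw [h, Nat.add_mod_right, Nat.mod_eq_of_lt ha]

lemma sum_fract_spacing (g : ℝ → ℝ) (ψ : ℝ) (q : ℕ) (hq : 0 < q) :
    ∑ m ∈ range q, g (Int.fract (ψ + m / q)) =
      ∑ s ∈ range q, g ((s + Int.fract (q * ψ)) / q) := by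
  have hq0 : (0:ℝ) < q := by exact_mod_cast hq
  set φ := Int.fract ψ with hφ
  have hφ0 : 0 ≤ φ := Int.fract_nonneg ψ
  have hφ1 : φ < 1 := Int.fract_lt_one ψ
  have hu : Int.fract ((q:ℝ) * ψ) = Int.fract ((q:ℝ) * φ) := by
    have h : (q:ℝ) * ψ = ((q * ⌊ψ⌋ : ℤ) : ℝ) + (q:ℝ) * φ := by
      push_cast
      nlinarith [Int.floor_add_fract ψ]
    rw [h, Int.fract_intCast_add]
  set u := Int.fract ((q:ℝ) * φ) with hudef
  have hu0 : 0 ≤ u := Int.fract_nonneg _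
  have hu1 : u < 1 := Int.fract_lt_one _
  set k := (⌊(q:ℝ) * φ⌋).toNat with hkdef
  have hfl0 : 0 ≤ ⌊(q:ℝ) * φ⌋ := Int.floor_nonneg.2 (by positivity)
  have hkcast : (k:ℝ) = (⌊(q:ℝ) * φ⌋ : ℝ) := by
    have := Int.toNat_of_nonneg hfl0
    exact_mod_cast congrArg (Int.cast : ℤ → ℝ) this
  have hkq : k < q := by
    have h1 : (k:ℝ) ≤ (q:ℝ) * φ := by rw [hkcast]; exact Int.floor_le _
    have h2 : (q:ℝ) * φ < q := by nlinarith
    exact_mod_cast h1.trans_lt h2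
  have hqφ : (q:ℝ) * φ = k + u := by
    rw [hkcast, hudef, Int.fract]; ring
  have key : ∀ m, m < q → Int.fract (ψ + m / q) = (((k + m) % q : ℕ) + u) / q := by
    intro m hm
    have h1 : ψ + (m:ℝ) / q = ((⌊ψ⌋ : ℤ) : ℝ) + (φ + m / q) := by
      push_cast
      have := Int.floor_add_fract ψ
      linarith
    rw [h1, Int.fract_intCast_add]
    have hdm : q * ((k + m) / q) + (k + m) % q = k + m := Nat.div_add_mod _ _
    set d := (k + m) / q with hd
    set s := (k + m) % q with hs
    have hsq : s < q := Nat.mod_lt _ hq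
    have h2 : φ + (m:ℝ) / q = (d:ℝ) + ((s:ℝ) + u) / q := by
      have hc : ((q * d + s : ℕ) : ℝ) = ((k + m : ℕ) : ℝ) := by
        exact_mod_cast congrArg (Nat.cast : ℕ → ℝ) hdm
      push_cast at hc
      field_simp
      nlinarith [hqφ]
    rw [h2, add_comm ((d:ℝ)) _, Int.fract_add_natCast, Int.fract_eq_self.2]
    constructor
    · positivity
    · rw [div_lt_one hq0]
      have : (s:ℝ) + 1 ≤ q := by exact_mod_cast Nat.succ_le_of_lt hsq
      linarith
  rw [hu]
  refine Finset.sum_nbij' (fun m => (k + m) % q) (fun s => (s + (q - k)) % q) ?_ ?_ ?_ ?_ ?_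
  · intro a ha; exact mem_range.2 (Nat.mod_lt _ hq)
  · intro a ha; exact mem_range.2 (Nat.mod_lt _ hq)
  · intro a ha; exact mod_shift_inv hkq (mem_range.1 ha)
  · intro a ha
    show (k + (a + (q - k)) % q) % q = a
    rw [Nat.add_mod_mod]
    have h : k + (a + (q - k)) = a + q := by omega
    rw [h, Nat.add_mod_right, Nat.mod_eq_of_lt (mem_range.1 ha)]
  · intro a ha
    rw [key a (mem_range.1 ha)]

lemma count_linear_upper (ψ L : ℝ) (q : ℕ) (hq : 0 < q) (hL : 0 ≤ L) :
    (∑ m ∈ range q, if Int.fract (ψ + m / q) < L then (1:ℝ) else 0) ≤ q * L + 1 := by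
  have hq0 : (0:ℝ) < q := by exact_mod_cast hq
  rw [sum_fract_spacing (fun t => if t < L then (1:ℝ) else 0) ψ q hq]
  set u := Int.fract ((q:ℝ) * ψ) with hu
  have hu0 : 0 ≤ u := Int.fract_nonneg _
  calc (∑ s ∈ range q, if ((s:ℝ) + u) / q < L then (1:ℝ) else 0)
      ≤ ∑ s ∈ range q, if (s:ℝ) < q * L then (1:ℝ) else 0 := by
        refine Finset.sum_le_sum fun s _ => ?_
        split_ifs with h1 h2
        · exact le_refl 1
        · exact absurd (by rw [div_lt_iff₀ hq0] at h1; nlinarith) h2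
        · norm_num
        · exact le_refl 0
    _ = (((range q).filter (fun s : ℕ => (s:ℝ) < q * L)).card : ℝ) := Finset.sum_boole _ _
    _ ≤ ((range ⌈q * L⌉₊).card : ℝ) := by
        have hsub : (range q).filter (fun s : ℕ => (s:ℝ) < q * L) ⊆ range ⌈q * L⌉₊ := by
          intro s hs
          simp only [mem_filter, mem_range] at hs ⊢
          exact Nat.lt_ceil.2 hs.2
        exact_mod_cast Finset.card_le_card hsub
    _ ≤ q * L + 1 := by
        rw [Finset.card_range]
        have := Nat.ceil_lt_add_one (by positivity : (0:ℝ) ≤ q * L)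
        linarith

lemma count_linear_lower (ψ L : ℝ) (q : ℕ) (hq : 0 < q) (hL : 0 ≤ L) (hL1 : L ≤ 1) :
    q * L - 1 ≤ ∑ m ∈ range q, if Int.fract (ψ + m / q) < L then (1:ℝ) else 0 := by
  have hq0 : (0:ℝ) < q := by exact_mod_cast hq
  rw [sum_fract_spacing (fun t => if t < L then (1:ℝ) else 0) ψ q hq]
  set u := Int.fract ((q:ℝ) * ψ) with hu
  have hu0 : 0 ≤ u := Int.fract_nonneg _
  have hu1 : u < 1 := Int.fract_lt_one _
  have hfq : ⌊q * L⌋₊ ≤ q := by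
    have h1 : ⌊q * L⌋₊ ≤ ⌊(q:ℝ)⌋₊ := Nat.floor_le_floor (by nlinarith)
    simpa using h1
  calc (q:ℝ) * L - 1 ≤ ⌊q * L⌋₊ := by
        have := Nat.lt_floor_add_one ((q:ℝ) * L)
        linarith
    _ = ∑ s ∈ range ⌊q * L⌋₊, (1:ℝ) := by simp
    _ ≤ ∑ s ∈ range ⌊q * L⌋₊, (if ((s:ℝ) + u) / q < L then (1:ℝ) else 0) := by
        refine Finset.sum_le_sum fun s hs => ?_
        have hs' : (s:ℝ) + 1 ≤ ⌊q * L⌋₊ := by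
          exact_mod_cast Nat.succ_le_of_lt (mem_range.1 hs)
        have hfle : (⌊q * L⌋₊ : ℝ) ≤ q * L := Nat.floor_le (by positivity)
        have : ((s:ℝ) + u) / q < L := by
          rw [div_lt_iff₀ hq0]; nlinarith
        rw [if_pos this]
    _ ≤ ∑ s ∈ range q, (if ((s:ℝ) + u) / q < L then (1:ℝ) else 0) := by
        refine Finset.sum_le_sum_of_subset_of_nonneg ?_ (fun i _ _ => by positivity)
        exact Finset.range_subset_range.2 hfq

lemma sum_fract_mul_reindex (g : ℝ → ℝ) (ψ : ℝ) (q p' : ℕ) (hq : 0 < q)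
    (hcop : Nat.Coprime p' q) :
    ∑ j ∈ range q, g (Int.fract (ψ + j * p' / q)) =
      ∑ m ∈ range q, g (Int.fract (ψ + m / q)) := by
  haveI : NeZero q := ⟨hq.ne'⟩
  have hq0 : (0:ℝ) < q := by exact_mod_cast hq
  set pinv := ((p' : ZMod q)⁻¹).val with hpinv
  have hmod : p' * pinv ≡ 1 [MOD q] := by
    rw [← ZMod.natCast_eq_natCast_iff]
    push_cast
    rw [ZMod.natCast_val, ZMod.cast_id]
    exact ZMod.coe_mul_inv_eq_one p' hcop
  have hmod' : pinv * p' ≡ 1 [MOD q] := by rwa [Nat.mul_comm]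
  have key : ∀ j : ℕ, Int.fract (ψ + (j:ℝ) * p' / q) = Int.fract (ψ + ((j * p') % q : ℕ) / q) := by
    intro j
    have hdm : q * ((j * p') / q) + (j * p') % q = j * p' := Nat.div_add_mod _ _
    have h1 : ψ + (j:ℝ) * p' / q = (ψ + ((j * p') % q : ℕ) / q) + ((j * p') / q : ℕ) := by
      have hc : ((q * ((j * p') / q) + (j * p') % q : ℕ) : ℝ) = ((j * p' : ℕ) : ℝ) := by
        exact_mod_cast congrArg (Nat.cast : ℕ → ℝ) hdm
      push_cast at hc
      field_simp
      linarith
    rw [h1, Int.fract_add_natCast]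
  refine Finset.sum_nbij' (fun j => (j * p') % q) (fun m => (m * pinv) % q) ?_ ?_ ?_ ?_ ?_
  · intro a _; exact mem_range.2 (Nat.mod_lt _ hq)
  · intro a _; exact mem_range.2 (Nat.mod_lt _ hq)
  · intro a ha
    show (a * p' % q * pinv) % q = a
    rw [Nat.mod_mul_mod, Nat.mul_assoc]
    calc (a * (p' * pinv)) % q = (a * 1) % q := (Nat.ModEq.mul_left a hmod)
      _ = a := by rw [Nat.mul_one, Nat.mod_eq_of_lt (mem_range.1 ha)]
  · intro a ha
    show (a * pinv % q * p') % q = a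
    rw [Nat.mod_mul_mod, Nat.mul_assoc]
    calc (a * (pinv * p')) % q = (a * 1) % q := (Nat.ModEq.mul_left a hmod')
      _ = a := by rw [Nat.mul_one, Nat.mod_eq_of_lt (mem_range.1 ha)]
  · intro a _
    rw [key a]

lemma count_approx (α θ β ε : ℝ) (q : ℕ) (p : ℤ) (p' : ℕ) (hq : 0 < q)
    (hp' : (p' : ℤ) = p % q) (hcop : Nat.Coprime p' q)
    (hδ : |(q:ℝ) * α - p| ≤ ε) (hε0 : 0 ≤ ε) (hεq : (q:ℝ) * ε ≤ 1)
    (hβ0 : 0 ≤ β) (hβ1 : β ≤ 1) :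
    |(∑ j ∈ range q, if Int.fract (θ + j * α) < β then (1:ℝ) else 0) - q * β| ≤ 4 := by
  have hq0 : (0:ℝ) < q := by exact_mod_cast hq
  have hq1 : (1:ℝ) ≤ q := by exact_mod_cast hq
  have hε1 : ε ≤ 1 := by nlinarith
  set δ := (q:ℝ) * α - p with hδdef
  set y : ℕ → ℝ := fun j => θ + (j:ℝ) * (p':ℝ) / q with hy
  set η : ℕ → ℝ := fun j => (j:ℝ) * δ / q with hη
  have hηb : ∀ j, j < q → |η j| ≤ ε := by
    intro j hj
    have hj' : (j:ℝ) ≤ q := by exact_mod_cast hj.le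
    have hj0 : (0:ℝ) ≤ j := by positivity
    rw [hη]
    rw [abs_div, abs_mul, abs_of_nonneg hj0, abs_of_pos hq0, div_le_iff₀ hq0]
    calc (j:ℝ) * |δ| ≤ (q:ℝ) * ε := by
          apply mul_le_mul hj' hδ (abs_nonneg _) (le_of_lt hq0)
      _ = ε * q := by ring
  have hfr : ∀ j : ℕ, Int.fract (θ + (j:ℝ) * α) = Int.fract (y j + η j) := by
    intro j
    have hpq : (q:ℤ) * (p / q) + p % q = p := Int.mul_ediv_add_emod p q
    have hp'R : (p':ℝ) = (p:ℝ) - (q:ℝ) * ((p / (q:ℤ) : ℤ) : ℝ) := by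
      have : (p':ℤ) = p - (q:ℤ) * (p / (q:ℤ)) := by rw [hp']; omega
      exact_mod_cast congrArg (Int.cast : ℤ → ℝ) this
    have heq : θ + (j:ℝ) * α = (y j + η j) + ((j * (p / (q:ℤ)) : ℤ) : ℝ) := by
      rw [hy, hη, hδdef, hp'R]
      push_cast
      field_simp
      ring
    rw [heq, Int.fract_add_intCast]
  -- upper bound
  have claim1 : ∀ j : ℕ, j < q → Int.fract (θ + (j:ℝ) * α) < β →
      Int.fract (y j) < β + ε ∨ 1 - ε ≤ Int.fract (y j) := by
    intro j hj hlt
    by_contra hcon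
    push_neg at hcon
    obtain ⟨h1, h2⟩ := hcon
    have hb := hηb j hj
    have habs := abs_le.1 hb
    have h0 : 0 ≤ Int.fract (y j) + η j := by linarith
    have h1' : Int.fract (y j) + η j < 1 := by linarith
    rw [hfr j, fract_add_small _ _ h0 h1'] at hlt
    linarith
  have reidx : ∀ L : ℝ, (∑ j ∈ range q, if Int.fract (y j) < L then (1:ℝ) else 0)
      = ∑ m ∈ range q, if Int.fract (θ + m / q) < L then (1:ℝ) else 0 := by
    intro L
    exact sum_fract_mul_reindex (fun t => if t < L then (1:ℝ) else 0) θ q p' hq hcop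
  have upper : (∑ j ∈ range q, if Int.fract (θ + (j:ℝ) * α) < β then (1:ℝ) else 0)
      ≤ q * β + 4 := by
    have step1 : (∑ j ∈ range q, if Int.fract (θ + (j:ℝ) * α) < β then (1:ℝ) else 0)
        ≤ (∑ j ∈ range q, if Int.fract (y j) < β + ε then (1:ℝ) else 0)
          + (∑ j ∈ range q, if 1 - ε ≤ Int.fract (y j) then (1:ℝ) else 0) := by
      rw [← Finset.sum_add_distrib]
      refine Finset.sum_le_sum fun j hj => ?_
      by_cases hA : Int.fract (θ + (j:ℝ) * α) < β
      · rcases claim1 j (mem_range.1 hj) hA with h | h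
        · rw [if_pos hA, if_pos h]; split_ifs <;> norm_num
        · rw [if_pos hA, if_pos h]; split_ifs <;> norm_num
      · rw [if_neg hA]; split_ifs <;> norm_num
    have e2 : (∑ j ∈ range q, if 1 - ε ≤ Int.fract (y j) then (1:ℝ) else 0)
        = q - (∑ j ∈ range q, if Int.fract (y j) < 1 - ε then (1:ℝ) else 0) := by
      rw [eq_sub_iff_add_eq, ← Finset.sum_add_distrib]
      have : ∀ j ∈ range q, ((if 1 - ε ≤ Int.fract (y j) then (1:ℝ) else 0)
          + if Int.fract (y j) < 1 - ε then (1:ℝ) else 0) = 1 := by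
        intro j _
        rcases lt_or_ge (Int.fract (y j)) (1 - ε) with h | h
        · rw [if_neg (by linarith), if_pos h]; norm_num
        · rw [if_pos h, if_neg (by linarith)]; norm_num
      rw [Finset.sum_congr rfl this]
      simp
    have b1 : (∑ j ∈ range q, if Int.fract (y j) < β + ε then (1:ℝ) else 0)
        ≤ q * (β + ε) + 1 := by
      rw [reidx]; exact count_linear_upper θ (β + ε) q hq (by linarith)
    have b2 : q * (1 - ε) - 1 ≤ ∑ j ∈ range q, if Int.fract (y j) < 1 - ε then (1:ℝ) else 0 := by
      rw [reidx]; exact count_linear_lower θ (1 - ε) q hq (by linarith) (by linarith)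
    calc (∑ j ∈ range q, if Int.fract (θ + (j:ℝ) * α) < β then (1:ℝ) else 0)
        ≤ (q * (β + ε) + 1) + (q - (q * (1 - ε) - 1)) := by
          rw [e2] at step1
          linarith
      _ ≤ q * β + 4 := by nlinarith
  -- lower bound
  have lower : q * β - 4 ≤ ∑ j ∈ range q, if Int.fract (θ + (j:ℝ) * α) < β then (1:ℝ) else 0 := by
    rcases lt_or_ge β (2 * ε) with hsm | hsm
    · have hpos : (0:ℝ) ≤ ∑ j ∈ range q, if Int.fract (θ + (j:ℝ) * α) < β then (1:ℝ) else 0 := by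
        refine Finset.sum_nonneg fun j _ => ?_
        split_ifs <;> norm_num
      nlinarith
    · have claim2 : ∀ j : ℕ, j < q → ε ≤ Int.fract (y j) → Int.fract (y j) < β - ε →
          Int.fract (θ + (j:ℝ) * α) < β := by
        intro j hj hge hlt
        have hb := hηb j hj
        have habs := abs_le.1 hb
        have h0 : 0 ≤ Int.fract (y j) + η j := by linarith
        have h1' : Int.fract (y j) + η j < 1 := by linarith
        rw [hfr j, fract_add_small _ _ h0 h1']
        linarith
      have step1 : (∑ j ∈ range q, if Int.fract (y j) < β - ε then (1:ℝ) else 0)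
          - (∑ j ∈ range q, if Int.fract (y j) < ε then (1:ℝ) else 0)
          ≤ ∑ j ∈ range q, if Int.fract (θ + (j:ℝ) * α) < β then (1:ℝ) else 0 := by
        rw [sub_le_iff_le_add, ← Finset.sum_add_distrib]
        refine Finset.sum_le_sum fun j hj => ?_
        by_cases h1 : Int.fract (y j) < β - ε
        · by_cases h2 : Int.fract (y j) < ε
          · rw [if_pos h1, if_pos h2]
            split_ifs <;> norm_num
          · push_neg at h2
            have := claim2 j (mem_range.1 hj) h2 h1
            rw [if_pos h1, if_neg (not_lt.2 h2), if_pos this]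
            norm_num
        · rw [if_neg h1]
          split_ifs <;> norm_num
      have b1 : q * (β - ε) - 1 ≤ ∑ j ∈ range q, if Int.fract (y j) < β - ε then (1:ℝ) else 0 := by
        rw [reidx]; exact count_linear_lower θ (β - ε) q hq (by linarith) (by linarith)
      have b2 : (∑ j ∈ range q, if Int.fract (y j) < ε then (1:ℝ) else 0) ≤ q * ε + 1 := by
        rw [reidx]; exact count_linear_upper θ ε q hq hε0
      nlinarith
  exact abs_le.2 ⟨by linarith, by linarith⟩

lemma coe_eq_coe (z t : ℝ) : (z : UnitAddCircle) = (t : UnitAddCircle) ↔ ∃ k : ℤ, z - t = k := by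
  rw [QuotientAddGroup.eq_iff_sub_mem]
  constructor
  · intro h
    rcases AddSubgroup.mem_zmultiples_iff.1 h with ⟨k, hk⟩
    exact ⟨k, by simpa using hk.symm⟩
  · rintro ⟨k, hk⟩
    exact AddSubgroup.mem_zmultiples_iff.2 ⟨k, by simpa using hk.symm⟩

lemma mem_arc_iff (a β : ℝ) (h0 : 0 ≤ β) (h1 : β ≤ 1) (z : ℝ) :
    ((z : UnitAddCircle) ∈ (fun t : ℝ => (t : UnitAddCircle)) '' Set.Ico a (a + β)) ↔
      Int.fract (z - a) < β := by
  constructor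
  · rintro ⟨t, ht, he⟩
    rcases (coe_eq_coe t z).1 he with ⟨k, hk⟩
    have h2 : z - a = (t - a) + (-k : ℤ) := by push_cast; linarith
    rw [h2, Int.fract_add_intCast, Int.fract_eq_self.2 ⟨by linarith [ht.1], by linarith [ht.2]⟩]
    linarith [ht.2]
  · intro h
    refine ⟨a + Int.fract (z - a), ⟨by linarith [Int.fract_nonneg (z - a)], by linarith⟩, ?_⟩
    apply (coe_eq_coe _ _).2
    exact ⟨-⌊z - a⌋, by rw [Int.fract]; push_cast; ring⟩

lemma vol_arc (a β : ℝ) (h0 : 0 ≤ β) (h1 : β ≤ 1) :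
    volume ((fun t : ℝ => (t : UnitAddCircle)) '' Set.Ico a (a + β)) = ENNReal.ofReal β := by
  set S := (fun t : ℝ => (t : UnitAddCircle)) '' Set.Ico a (a + β) with hS
  have hpre : (fun t : ℝ => (t : UnitAddCircle)) ⁻¹' S = {z : ℝ | Int.fract (z - a) < β} := by
    ext z
    exact mem_arc_iff a β h0 h1 z
  have hpre_meas : MeasurableSet ((fun t : ℝ => (t : UnitAddCircle)) ⁻¹' S) := by
    rw [hpre]
    exact measurableSet_lt ((measurable_fract).comp (measurable_id.sub_const a)) measurable_const
  have hSmeas : MeasurableSet S := measurableSet_quotient.2 hpre_meas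
  have hmp := AddCircle.measurePreserving_mk 1 a
  have key : volume S = (volume.restrict (Set.Ioc a (a + 1)))
      ((fun t : ℝ => (t : UnitAddCircle)) ⁻¹' S) :=
    (hmp.measure_preimage hSmeas.nullMeasurableSet).symm
  rw [key, Measure.restrict_apply hpre_meas, hpre]
  have hsub1 : Set.Ioo a (a + β) ⊆ {z : ℝ | Int.fract (z - a) < β} ∩ Set.Ioc a (a + 1) := by
    intro z hz
    obtain ⟨hz1, hz2⟩ := hz
    constructor
    · have : Int.fract (z - a) = z - a := Int.fract_eq_self.2 ⟨by linarith, by linarith⟩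
      simp only [Set.mem_setOf_eq, this]
      linarith
    · exact ⟨hz1, by linarith⟩
  have hsub2 : {z : ℝ | Int.fract (z - a) < β} ∩ Set.Ioc a (a + 1) ⊆
      Set.Ioo a (a + β) ∪ {a + 1} := by
    rintro z ⟨hz1, hz2, hz3⟩
    rcases eq_or_lt_of_le hz3 with he | hlt
    · right; simp [he]
    · left
      have : Int.fract (z - a) = z - a := Int.fract_eq_self.2 ⟨by linarith, by linarith⟩
      simp only [Set.mem_setOf_eq, this] at hz1
      exact ⟨hz2, by linarith⟩
  refine le_antisymm ?_ ?_
  · calc volume ({z : ℝ | Int.fract (z - a) < β} ∩ Set.Ioc a (a + 1))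
        ≤ volume (Set.Ioo a (a + β) ∪ {a + 1}) := measure_mono hsub2
      _ ≤ volume (Set.Ioo a (a + β)) + volume ({a + 1} : Set ℝ) := measure_union_le _ _
      _ = ENNReal.ofReal β := by
          rw [Real.volume_Ioo, Real.volume_singleton, add_zero]
          congr 1
          ring
  · calc ENNReal.ofReal β = volume (Set.Ioo a (a + β)) := by
          rw [Real.volume_Ioo]; congr 1; ring
      _ ≤ _ := measure_mono hsub1

lemma arc_normalize (a₀ b₀ : ℝ) :
    ∃ a β : ℝ, 0 ≤ β ∧ β ≤ 1 ∧
      (∀ z : ℝ, ((z : UnitAddCircle) ∈ (fun t : ℝ => (t : UnitAddCircle)) '' Set.Ico a₀ b₀ ↔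
        Int.fract (z - a) < β)) ∧
      volume ((fun t : ℝ => (t : UnitAddCircle)) '' Set.Ico a₀ b₀) = ENNReal.ofReal β := by
  rcases le_or_gt b₀ a₀ with hba | hab
  · refine ⟨0, 0, le_refl 0, zero_le_one, ?_, ?_⟩
    · intro z
      rw [Set.Ico_eq_empty (not_lt.2 hba)]
      simp only [Set.image_empty, Set.mem_empty_iff_false, false_iff, not_lt]
      exact Int.fract_nonneg _
    · rw [Set.Ico_eq_empty (not_lt.2 hba)]
      simp
  · rcases le_or_gt b₀ (a₀ + 1) with hb1 | hb1
    · have hrw : a₀ + (b₀ - a₀) = b₀ := by ring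
      refine ⟨a₀, b₀ - a₀, by linarith, by linarith, ?_, ?_⟩
      · intro z
        have h := mem_arc_iff a₀ (b₀ - a₀) (by linarith) (by linarith) z
        rwa [hrw] at h
      · have h := vol_arc a₀ (b₀ - a₀) (by linarith) (by linarith)
        rwa [hrw] at h
    · have heq : (fun t : ℝ => (t : UnitAddCircle)) '' Set.Ico a₀ b₀ =
          (fun t : ℝ => (t : UnitAddCircle)) '' Set.Ico a₀ (a₀ + 1) := by
        apply Set.Subset.antisymm
        · rintro x ⟨t, _, rfl⟩
          exact (mem_arc_iff a₀ 1 zero_le_one le_rfl t).2 (Int.fract_lt_one _)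
        · exact Set.image_mono (Set.Ico_subset_Ico le_rfl (by linarith))
      refine ⟨a₀, 1, zero_le_one, le_rfl, ?_, ?_⟩
      · intro z
        rw [heq]
        exact mem_arc_iff a₀ 1 zero_le_one le_rfl z
      · rw [heq]
        exact vol_arc a₀ 1 zero_le_one le_rfl

lemma int_gcd_emod (p q : ℤ) : Int.gcd (p % q) q = Int.gcd p q := by
  apply Nat.dvd_antisymm
  · have h1 : ((Int.gcd (p % q) q : ℕ) : ℤ) ∣ p % q := Int.gcd_dvd_left _ _
    have h2 : ((Int.gcd (p % q) q : ℕ) : ℤ) ∣ q := Int.gcd_dvd_right _ _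
    have h3 : ((Int.gcd (p % q) q : ℕ) : ℤ) ∣ p := by
      have hd := dvd_add (Dvd.dvd.mul_right h2 (p / q)) h1
      rwa [Int.mul_ediv_add_emod p q] at hd
    exact_mod_cast Int.dvd_coe_gcd h3 h2
  · have h1 : ((Int.gcd p q : ℕ) : ℤ) ∣ p := Int.gcd_dvd_left _ _
    have h2 : ((Int.gcd p q : ℕ) : ℤ) ∣ q := Int.gcd_dvd_right _ _
    have h3 : ((Int.gcd p q : ℕ) : ℤ) ∣ p % q := by
      rw [Int.emod_def]
      exact dvd_sub h1 (Dvd.dvd.mul_right h2 _)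
    exact_mod_cast Int.dvd_coe_gcd h3 h2

lemma diophantine_of_not_liouville (α : ℝ) (hα : α ∈ Set.Ioo (0:ℝ) 1) (hirr : Irrational α)
    (hnl : ¬ Liouville α) :
    ∃ v : ℕ, 2 ≤ v ∧ ∃ c : ℝ, 0 < c ∧ c ≤ 1 ∧
      ∀ q : ℕ, 0 < q → ∀ p : ℤ, c / (q:ℝ)^v ≤ |(q:ℝ) * α - p| := by
  obtain ⟨hα0, hα1⟩ := hα
  unfold Liouville at hnl
  push_neg at hnl
  obtain ⟨n, hn⟩ := hnl
  refine ⟨n + 2, by omega, min α (1 - α), lt_min hα0 (by linarith), ?_, ?_⟩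
  · calc min α (1 - α) ≤ α := min_le_left _ _
      _ ≤ 1 := hα1.le
  intro q hq p
  have hqR : (1:ℝ) ≤ q := by exact_mod_cast hq
  have hqR0 : (0:ℝ) < q := by linarith
  rcases eq_or_lt_of_le (show 1 ≤ q from hq) with h1 | h2
  · -- q = 1
    have hq1 : q = 1 := h1.symm
    subst hq1
    have hbnd : min α (1 - α) ≤ |(1:ℝ) * α - p| := by
      rw [one_mul]
      rcases le_or_gt (p:ℝ) 0 with h | h
      · calc min α (1 - α) ≤ α := min_le_left _ _
          _ ≤ α - p := by linarith
          _ ≤ |α - p| := le_abs_self _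
      · have hp1 : (1:ℝ) ≤ p := by exact_mod_cast (by exact_mod_cast h : (0:ℤ) < p)
        calc min α (1 - α) ≤ 1 - α := min_le_right _ _
          _ ≤ (p:ℝ) - α := by linarith
          _ ≤ |(p:ℝ) - α| := le_abs_self _
          _ = |α - p| := abs_sub_comm _ _
    calc min α (1 - α) / ((1:ℕ):ℝ)^(n+2) = min α (1 - α) := by norm_num
      _ ≤ |((1:ℕ):ℝ) * α - p| := by push_cast; push_cast at hbnd; exact hbnd
  · -- q ≥ 2
    have hb1 : (1:ℤ) < (q:ℤ) := by exact_mod_cast h2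
    have hne : α ≠ (p:ℝ) / ((q:ℤ):ℝ) := (irrational_iff_ne_rational α).1 hirr p q (by exact_mod_cast hq.ne')
    have hb := hn p q hb1 hne
    have key : |(q:ℝ) * α - p| = q * |α - (p:ℝ)/(q:ℝ)| := by
      rw [← abs_of_pos hqR0, ← abs_mul]
      congr 1
      field_simp
      rw [abs_of_pos hqR0]; ring
    have hpow : (0:ℝ) < (q:ℝ)^n := by positivity
    calc min α (1 - α) / (q:ℝ)^(n+2) ≤ 1 / (q:ℝ)^(n+2) := by
          gcongr
          calc min α (1 - α) ≤ α := min_le_left _ _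
            _ ≤ 1 := hα1.le
      _ ≤ 1 / (q:ℝ)^n := by
          apply one_div_le_one_div_of_le hpow
          exact pow_le_pow_right₀ hqR (by omega)
      _ ≤ (q:ℝ) * (1 / (q:ℝ)^n) := le_mul_of_one_le_left (by positivity) hqR
      _ ≤ (q:ℝ) * |α - (p:ℝ)/(q:ℝ)| := by
          apply mul_le_mul_of_nonneg_left ?_ (le_of_lt hqR0)
          calc (1:ℝ) / (q:ℝ)^n = 1 / ((q:ℤ):ℝ)^n := by norm_num
            _ ≤ |α - (p:ℝ)/((q:ℤ):ℝ)| := hb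
            _ = |α - (p:ℝ)/(q:ℝ)| := by norm_num
      _ = |(q:ℝ) * α - p| := key.symm

lemma dirichlet_step (α : ℝ) (hα0 : 0 < α) (N : ℕ) (hN : 0 < N) :
    ∃ (q : ℕ) (p : ℤ) (p' : ℕ), 0 < q ∧ q ≤ N ∧ (p' : ℤ) = p % (q:ℤ) ∧ Nat.Coprime p' q ∧
      |(q:ℝ) * α - p| ≤ 1 / ((N:ℝ) + 1) := by
  obtain ⟨j, k, hk0, hkN, hjk⟩ := Real.exists_int_int_abs_mul_sub_le α hN
  set d := Int.gcd j k with hd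
  have hd0 : 0 < d := Int.gcd_pos_iff.2 (Or.inr hk0.ne')
  have hdZ : (0:ℤ) < d := by exact_mod_cast hd0
  have hdvdj : (d:ℤ) ∣ j := Int.gcd_dvd_left _ _
  have hdvdk : (d:ℤ) ∣ k := Int.gcd_dvd_right _ _
  have hkd0 : 0 < k / (d:ℤ) := by
    have hle : (d:ℤ) ≤ k := Int.le_of_dvd hk0 hdvdk
    have := Int.ediv_le_ediv hdZ hle
    rwa [Int.ediv_self hdZ.ne'] at this
  set q := (k / (d:ℤ)).toNat with hqdef
  set p := j / (d:ℤ) with hpdef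
  have hqZ : ((q:ℕ):ℤ) = k / (d:ℤ) := Int.toNat_of_nonneg hkd0.le
  have hq0 : 0 < q := by omega
  have hcop0 : Int.gcd p ((q:ℕ):ℤ) = 1 := by
    rw [hqZ, hpdef]
    exact Int.gcd_div_gcd_div_gcd hd0
  set p' := (p % ((q:ℕ):ℤ)).toNat with hp'def
  have hqne : ((q:ℕ):ℤ) ≠ 0 := by exact_mod_cast hq0.ne'
  have hp'nn : 0 ≤ p % ((q:ℕ):ℤ) := Int.emod_nonneg p hqne
  have hp' : ((p':ℕ):ℤ) = p % ((q:ℕ):ℤ) := Int.toNat_of_nonneg hp'nn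
  have hcop : Nat.Coprime p' q := by
    have h1 : Int.gcd ((q:ℕ):ℤ) p = 1 := by rwa [Int.gcd_comm]
    have h2 : Int.gcd (p % ((q:ℕ):ℤ)) ((q:ℕ):ℤ) = 1 := by
      rw [int_gcd_emod, Int.gcd_comm]
      exact h1
    have h3 : (p % ((q:ℕ):ℤ)).natAbs = p' := by
      rw [hp'def]; omega
    unfold Nat.Coprime
    rw [← h3]
    simpa [Int.gcd, Int.natAbs_natCast] using h2
  refine ⟨q, p, p', hq0, ?_, hp', hcop, ?_⟩
  · -- q ≤ N
    have h1 : k / (d:ℤ) ≤ k := Int.ediv_le_self _ hk0.le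
    have h2 : ((q:ℕ):ℤ) ≤ N := by rw [hqZ]; exact h1.trans hkN
    exact_mod_cast h2
  · -- approximation quality
    have hdR : (0:ℝ) < (d:ℝ) := by exact_mod_cast hd0
    have hqR : ((q:ℕ):ℝ) = (k:ℝ) / (d:ℝ) := by
      have : (((k / (d:ℤ)):ℤ):ℝ) = (k:ℝ) / (d:ℝ) := Int.cast_div_charZero hdvdk
      rw [← this, ← hqZ]
      norm_cast
    have hpR : ((p:ℤ):ℝ) = (j:ℝ) / (d:ℝ) := by
      rw [hpdef]
      have : (((j / (d:ℤ)):ℤ):ℝ) = (j:ℝ) / ((d:ℤ):ℝ) := Int.cast_div_charZero hdvdj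
      rw [this]; norm_cast
    have heq : (q:ℝ) * α - p = ((k:ℝ) * α - j) / d := by
      rw [hqR, hpR]; field_simp
    rw [heq, abs_div, abs_of_pos hdR]
    have hd1 : (1:ℝ) ≤ (d:ℝ) := by exact_mod_cast hd0
    calc |(k:ℝ) * α - j| / (d:ℝ) ≤ |(k:ℝ) * α - j| := div_le_self (abs_nonneg _) hd1
      _ ≤ 1 / ((N:ℝ) + 1) := hjk

lemma sum_range_mul' {M : Type*} [AddCommMonoid M] (f : ℕ → M) (b q : ℕ) :
    ∑ j ∈ range (b * q), f j = ∑ i ∈ range b, ∑ jj ∈ range q, f (i * q + jj) := by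
  induction b with
  | zero => simp
  | succ n ihn =>
    rw [Nat.succ_mul, Finset.sum_range_add, ihn, Finset.sum_range_succ]

lemma block_bound (α : ℝ) {B : ℕ} (a β : Fin B → ℝ)
    (hβ0 : ∀ l, 0 ≤ β l) (hβ1 : ∀ l, β l ≤ 1) (hβsum : ∑ l, β l = 1/2)
    (q : ℕ) (p : ℤ) (p' : ℕ) (ε : ℝ) (hq : 0 < q)
    (hp' : (p' : ℤ) = p % (q:ℤ)) (hcop : Nat.Coprime p' q)
    (hδ : |(q:ℝ) * α - p| ≤ ε) (hε0 : 0 ≤ ε) (hεq : (q:ℝ) * ε ≤ 1) (w : ℝ) :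
    |∑ j ∈ range q, ((∑ l, if Int.fract (w + j * α - a l) < β l then (1:ℝ) else 0) - 1/2)|
      ≤ 4 * B := by
  have h1 : ∀ l : Fin B,
      |(∑ j ∈ range q, if Int.fract ((w - a l) + j * α) < β l then (1:ℝ) else 0) - q * β l|
        ≤ 4 :=
    fun l => count_approx α (w - a l) (β l) ε q p p' hq hp' hcop hδ hε0 hεq (hβ0 l) (hβ1 l)
  have h2 : (∑ j ∈ range q, ((∑ l, if Int.fract (w + j * α - a l) < β l then (1:ℝ) else 0) - 1/2))
      = ∑ l, ((∑ j ∈ range q, if Int.fract ((w - a l) + j * α) < β l then (1:ℝ) else 0)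
          - q * β l) := by
    rw [Finset.sum_sub_distrib, Finset.sum_sub_distrib, Finset.sum_comm, ← Finset.mul_sum, hβsum]
    congr 1
    · refine Finset.sum_congr rfl fun l _ => Finset.sum_congr rfl fun j _ => ?_
      rw [show w + (j:ℝ) * α - a l = (w - a l) + (j:ℝ) * α from by ring]
    · simp [Finset.sum_const, Finset.card_range]
  rw [h2]
  calc |∑ l, ((∑ j ∈ range q, if Int.fract ((w - a l) + j * α) < β l then (1:ℝ) else 0)
          - q * β l)|
      ≤ ∑ l, |(∑ j ∈ range q, if Int.fract ((w - a l) + j * α) < β l then (1:ℝ) else 0)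
          - q * β l| := Finset.abs_sum_le_sum_abs _ _
    _ ≤ ∑ _l : Fin B, (4:ℝ) := Finset.sum_le_sum fun l _ => h1 l
    _ = 4 * B := by simp [Finset.sum_const, Fintype.card_fin, mul_comm]

set_option maxHeartbeats 1000000 in
lemma deviation_bound (α : ℝ) (hα : α ∈ Set.Ioo (0:ℝ) 1) (hirr : Irrational α)
    (hnl : ¬ Liouville α) {B : ℕ} (a β : Fin B → ℝ)
    (hβ0 : ∀ l, 0 ≤ β l) (hβ1 : ∀ l, β l ≤ 1) (hβsum : ∑ l, β l = 1/2) :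
    ∃ e : ℝ, 0 < e ∧ e < 1 ∧ ∃ K : ℝ, 1 ≤ K ∧ ∀ N : ℕ, ∀ y : ℝ,
      |∑ j ∈ range N, ((∑ l, if Int.fract (y + ((j:ℝ)+1) * α - a l) < β l then (1:ℝ) else 0)
        - 1/2)| ≤ K * (N:ℝ) ^ (e:ℝ) := by
  obtain ⟨v, hv2, c, hc0, hc1, hdio⟩ := diophantine_of_not_liouville α hα hirr hnl
  have hvR : (2:ℝ) ≤ (v:ℝ) := by exact_mod_cast hv2
  have hv0 : (0:ℝ) < v := by linarith
  set e : ℝ := 1 - 1/(v:ℝ) with hedef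
  have he0 : 0 < e := by
    rw [hedef]
    have : 1/(v:ℝ) ≤ 1/2 := by
      apply one_div_le_one_div_of_le <;> linarith
    linarith
  have he1 : e < 1 := by
    rw [hedef]
    have : 0 < 1/(v:ℝ) := by positivity
    linarith
  set c' : ℝ := c ^ (-(1/(v:ℝ))) with hc'def
  have hc'0 : 0 < c' := Real.rpow_pos_of_pos hc0 _
  have h2e : (2:ℝ) ^ (-e) < 1 :=
    Real.rpow_lt_one_of_one_lt_of_neg one_lt_two (by linarith)
  have h2e0 : (0:ℝ) < (2:ℝ) ^ (-e) := Real.rpow_pos_of_pos two_pos _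
  set K : ℝ := max 1 ((4 * B * c') / (1 - (2:ℝ) ^ (-e))) with hKdef
  have hK1 : (1:ℝ) ≤ K := le_max_left _ _
  have hKmain : 4 * B * c' ≤ K * (1 - (2:ℝ) ^ (-e)) := by
    have hle : (4 * B * c') / (1 - (2:ℝ) ^ (-e)) ≤ K := le_max_right _ _
    have hpos : (0:ℝ) < 1 - (2:ℝ) ^ (-e) := by linarith
    calc 4 * (B:ℝ) * c' = ((4 * B * c') / (1 - (2:ℝ) ^ (-e))) * (1 - (2:ℝ) ^ (-e)) := by
          field_simp
      _ ≤ K * (1 - (2:ℝ) ^ (-e)) := mul_le_mul_of_nonneg_right hle hpos.le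
  refine ⟨e, he0, he1, K, hK1, ?_⟩
  intro N
  induction N using Nat.strong_induction_on with
  | _ N ih =>
  intro y
  rcases Nat.eq_zero_or_pos N with rfl | hN
  · simp [Real.zero_rpow he0.ne']
  obtain ⟨q, p, p', hq0, hqN, hp', hcop, happ⟩ := dirichlet_step α hα.1 N hN
  have hNR : (0:ℝ) < N := by exact_mod_cast hN
  have hqR : (0:ℝ) < q := by exact_mod_cast hq0
  have hqNR : (q:ℝ) ≤ N := by exact_mod_cast hqN
  set ε : ℝ := 1 / ((N:ℝ) + 1) with hεdef
  have hε0 : (0:ℝ) ≤ ε := by positivity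
  have hεq : (q:ℝ) * ε ≤ 1 := by
    rw [hεdef]
    rw [mul_one_div, div_le_one (by linarith)]
    linarith
  have hqlow : c * (N:ℝ) ≤ (q:ℝ) ^ (v:ℕ) := by
    have h1 := hdio q hq0 p
    have h2 : c / (q:ℝ)^v ≤ 1 / ((N:ℝ)+1) := h1.trans happ
    rw [div_le_div_iff₀ (by positivity) (by linarith)] at h2
    nlinarith
  set b := N / q with hbdef
  set r := N % q with hrdef
  have hb1 : 1 ≤ b := (Nat.one_le_div_iff hq0).2 hqN
  have hNdecomp : b * q + r = N := by
    rw [hbdef, hrdef, Nat.mul_comm]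
    exact Nat.div_add_mod N q
  have hrq : r < q := Nat.mod_lt _ hq0
  have hbq : q ≤ b * q := Nat.le_mul_of_pos_left q hb1
  have hrN : r < N := by omega
  have h2r : 2 * r ≤ N := by
    rcases (by omega : b = 1 ∨ 2 ≤ b) with hb | hb
    · rw [hb, one_mul] at hNdecomp
      omega
    · have h2q : 2 * q ≤ b * q := Nat.mul_le_mul_right q hb
      omega
  -- split the sum
  set F : ℕ → ℝ := fun j =>
    (∑ l, if Int.fract (y + ((j:ℝ)+1) * α - a l) < β l then (1:ℝ) else 0) - 1/2 with hFdef
  have hsplit : ∑ j ∈ range N, F j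
      = (∑ i ∈ range b, ∑ jj ∈ range q, F (i * q + jj)) + ∑ jj ∈ range r, F (b * q + jj) := by
    rw [← hNdecomp, Finset.sum_range_add, sum_range_mul']
  -- block bounds
  have hblock : ∀ i : ℕ, |∑ jj ∈ range q, F (i * q + jj)| ≤ 4 * B := by
    intro i
    have heq : ∑ jj ∈ range q, F (i * q + jj)
        = ∑ jj ∈ range q, ((∑ l, if Int.fract ((y + ((i*q:ℕ):ℝ) * α + α) + (jj:ℝ) * α - a l)
            < β l then (1:ℝ) else 0) - 1/2) := by
      refine Finset.sum_congr rfl fun jj _ => ?_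
      simp only [hFdef]
      congr 1
      refine Finset.sum_congr rfl fun l _ => ?_
      rw [show y + (((i*q+jj:ℕ):ℝ)+1) * α - a l
          = (y + ((i*q:ℕ):ℝ) * α + α) + (jj:ℝ) * α - a l from by push_cast; ring]
    rw [heq]
    exact block_bound α a β hβ0 hβ1 hβsum q p p' ε hq0 hp' hcop happ hε0 hεq _
  have htail : ∑ jj ∈ range r, F (b * q + jj)
      = ∑ j ∈ range r, ((∑ l, if Int.fract ((y + ((b*q:ℕ):ℝ) * α) + ((j:ℝ)+1) * α - a l)
          < β l then (1:ℝ) else 0) - 1/2) := by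
    refine Finset.sum_congr rfl fun jj _ => ?_
    simp only [hFdef]
    congr 1
    refine Finset.sum_congr rfl fun l _ => ?_
    rw [show y + (((b*q+jj:ℕ):ℝ)+1) * α - a l
        = (y + ((b*q:ℕ):ℝ) * α) + ((jj:ℝ)+1) * α - a l from by push_cast; ring]
  have hihr := ih r hrN (y + ((b*q:ℕ):ℝ) * α)
  -- numeric estimates
  have hvne : (v:ℝ) ≠ 0 := by linarith
  have hqv : (c * N) ^ (1/(v:ℝ)) ≤ (q:ℝ) := by
    have h1 : ((c * N) ^ (1/(v:ℝ)) : ℝ) ≤ ((q:ℝ) ^ (v:ℕ)) ^ (1/(v:ℝ)) :=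
      Real.rpow_le_rpow (by positivity) hqlow (by positivity)
    calc ((c * N) ^ (1/(v:ℝ)) : ℝ) ≤ ((q:ℝ) ^ (v:ℕ)) ^ (1/(v:ℝ)) := h1
      _ = ((q:ℝ) ^ ((v:ℕ):ℝ)) ^ (1/(v:ℝ)) := by rw [Real.rpow_natCast]
      _ = (q:ℝ) ^ (((v:ℕ):ℝ) * (1/(v:ℝ))) := by rw [← Real.rpow_mul (le_of_lt hqR)]
      _ = (q:ℝ) ^ (1:ℝ) := by rw [mul_one_div, div_self hvne]
      _ = (q:ℝ) := Real.rpow_one _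
  have hcN0 : (0:ℝ) < (c * N) ^ (1/(v:ℝ)) := Real.rpow_pos_of_pos (by positivity) _
  have hbR : (b:ℝ) ≤ (N:ℝ) / q := Nat.cast_div_le
  have hcalc : (N:ℝ) / ((c * N) ^ (1/(v:ℝ))) = c' * (N:ℝ) ^ e := by
    have hmul : ((c * N) ^ (1/(v:ℝ)) : ℝ) = c ^ (1/(v:ℝ)) * (N:ℝ) ^ (1/(v:ℝ)) :=
      Real.mul_rpow hc0.le (le_of_lt hNR)
    have hNe : (N:ℝ) ^ e = (N:ℝ) / (N:ℝ) ^ (1/(v:ℝ)) := by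
      rw [hedef, Real.rpow_sub hNR, Real.rpow_one]
    have hcinv : c' = (c ^ (1/(v:ℝ)))⁻¹ := by
      rw [hc'def, Real.rpow_neg hc0.le]
    have hp1 : (0:ℝ) < c ^ (1/(v:ℝ)) := Real.rpow_pos_of_pos hc0 _
    have hp2 : (0:ℝ) < (N:ℝ) ^ (1/(v:ℝ)) := Real.rpow_pos_of_pos hNR _
    rw [hmul, hNe, hcinv]
    field_simp
  have hbbound : (b:ℝ) ≤ c' * (N:ℝ) ^ e := by
    calc (b:ℝ) ≤ (N:ℝ) / q := hbR
      _ ≤ (N:ℝ) / ((c * N) ^ (1/(v:ℝ))) := by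
          apply div_le_div_of_nonneg_left hNR.le hcN0 hqv
      _ = c' * (N:ℝ) ^ e := hcalc
  have hrbound : ((r:ℕ):ℝ) ^ e ≤ (N:ℝ) ^ e * (2:ℝ) ^ (-e) := by
    have hr2 : ((r:ℕ):ℝ) ≤ (N:ℝ) / 2 := by
      have : ((2 * r : ℕ):ℝ) ≤ (N:ℝ) := by exact_mod_cast h2r
      push_cast at this
      linarith
    calc ((r:ℕ):ℝ) ^ e ≤ ((N:ℝ)/2) ^ e :=
          Real.rpow_le_rpow (Nat.cast_nonneg r) hr2 he0.le
      _ = (N:ℝ) ^ e / (2:ℝ) ^ e := Real.div_rpow hNR.le two_pos.le e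
      _ = (N:ℝ) ^ e * (2:ℝ) ^ (-e) := by
          rw [Real.rpow_neg two_pos.le]
          ring
  -- combine
  have hNe0 : (0:ℝ) ≤ (N:ℝ) ^ e := Real.rpow_nonneg hNR.le _
  calc |∑ j ∈ range N, F j|
      ≤ |∑ i ∈ range b, ∑ jj ∈ range q, F (i * q + jj)| + |∑ jj ∈ range r, F (b * q + jj)| := by
        rw [hsplit]; exact abs_add_le _ _
    _ ≤ (∑ i ∈ range b, |∑ jj ∈ range q, F (i * q + jj)|) + K * ((r:ℕ):ℝ) ^ e := by
        gcongr
        · exact Finset.abs_sum_le_sum_abs _ _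
        · rw [htail]; exact hihr
    _ ≤ (∑ _i ∈ range b, (4 * (B:ℝ))) + K * ((r:ℕ):ℝ) ^ e := by
        gcongr with i hi
        exact hblock i
    _ = (b:ℝ) * (4 * B) + K * ((r:ℕ):ℝ) ^ e := by
        rw [Finset.sum_const, Finset.card_range]
        simp [nsmul_eq_mul]
    _ ≤ (c' * (N:ℝ) ^ e) * (4 * B) + K * ((N:ℝ) ^ e * (2:ℝ) ^ (-e)) := by
        have h4B : (0:ℝ) ≤ 4 * (B:ℝ) := by positivity
        have hK0 : (0:ℝ) ≤ K := by linarith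
        gcongr
    _ ≤ K * (N:ℝ) ^ e := by nlinarith [hKmain, hNe0]

lemma sum_Icc_one_eq (g : ℕ → ℝ) (n : ℕ) :
    ∑ k ∈ Finset.Icc 1 n, g k = ∑ j ∈ range n, g (j+1) := by
  induction n with
  | zero => simp
  | succ m ih => rw [Finset.sum_Icc_succ_top (by omega), ih, Finset.sum_range_succ]

lemma sum_Icc_eq_sum_range_succ (g : ℕ → ℝ) (hg0 : g 0 = 0) (N : ℕ) :
    ∑ n ∈ Finset.Icc 1 N, g n = ∑ n ∈ range (N+1), g n := by
  induction N with
  | zero => simp [hg0]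
  | succ n ihn =>
    conv_rhs => rw [Finset.sum_range_succ]
    rw [Finset.sum_Icc_succ_top (by omega), ihn]

end NLH

open NLH in
theorem converges_of_not_liouville' (α : ℝ) (hα : α ∈ Set.Ioo (0 : ℝ) 1)
    (hirr : Irrational α) (hnl : ¬ Liouville α)
    (f : UnitAddCircle → ℝ)
    (hf : ∃ B : ℕ, ∃ I : Fin B → Set UnitAddCircle,
      (∀ l, ∃ a b : ℝ, I l = (fun t : ℝ => (t : UnitAddCircle)) '' Set.Ico a b) ∧
      Pairwise (Function.onFun Disjoint I) ∧
      volume (⋃ l, I l) = 1 / 2 ∧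
      f = fun x => 2 * Set.indicator (⋃ l, I l) (fun _ => (1 : ℝ)) x - 1)
    (x : UnitAddCircle) :
    ∃ L : ℝ,
      Filter.Tendsto (fun N : ℕ => ∑ n ∈ Finset.Icc 1 N,
          f (x + n • (α : UnitAddCircle)) * (1 / (n : ℝ)))
        Filter.atTop (𝓝 L) := by
  obtain ⟨B, I, hIarc, hdisj, hvolU, hfeq⟩ := hf
  choose a₀ b₀ hI using hIarc
  choose a β hβ0 hβ1 hmem0 hvol0 using fun l => arc_normalize (a₀ l) (b₀ l)
  have hmem : ∀ l (z : ℝ), ((z : UnitAddCircle) ∈ I l ↔ Int.fract (z - a l) < β l) := by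
    intro l z
    rw [hI l]
    exact hmem0 l z
  have hvol : ∀ l, volume (I l) = ENNReal.ofReal (β l) := by
    intro l
    rw [hI l]
    exact hvol0 l
  -- measurability of each arc
  have hmeas : ∀ l, MeasurableSet (I l) := by
    intro l
    apply measurableSet_quotient.2
    have hpre : (fun t : ℝ => (t : UnitAddCircle)) ⁻¹' (I l) =
        {z : ℝ | Int.fract (z - a l) < β l} := by
      ext z
      exact hmem l z
    show MeasurableSet ((fun t : ℝ => (t : UnitAddCircle)) ⁻¹' (I l))
    rw [hpre]
    exact measurableSet_lt ((measurable_fract).comp (measurable_id.sub_const (a l)))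
      measurable_const
  -- sum of lengths is 1/2
  have hβsum : ∑ l, β l = 1/2 := by
    have hU : volume (⋃ l, I l) = ∑' l, volume (I l) := measure_iUnion hdisj hmeas
    have h1 : ENNReal.ofReal (∑ l, β l) = ENNReal.ofReal (1/2) := by
      rw [ENNReal.ofReal_sum_of_nonneg (fun l _ => hβ0 l)]
      have h2 : ∑ l, ENNReal.ofReal (β l) = ∑ l, volume (I l) := by
        refine Finset.sum_congr rfl fun l _ => (hvol l).symm
      rw [h2]
      have h3 : ∑ l, volume (I l) = ∑' l, volume (I l) := (tsum_fintype _).symm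
      rw [h3, ← hU, hvolU]
      rw [ENNReal.ofReal_div_of_pos (by norm_num)]
      norm_num
    have := (ENNReal.ofReal_eq_ofReal_iff (Finset.sum_nonneg fun l _ => hβ0 l)
      (by norm_num)).1 h1
    linarith
  -- the indicator formula
  have hfF : ∀ z : ℝ, f ((z : ℝ) : UnitAddCircle)
      = 2 * ((∑ l, if Int.fract (z - a l) < β l then (1:ℝ) else 0) - 1/2) := by
    intro z
    simp only [hfeq]
    have hind : Set.indicator (⋃ l, I l) (fun _ => (1:ℝ)) ((z : ℝ) : UnitAddCircle)
        = ∑ l, if Int.fract (z - a l) < β l then (1:ℝ) else 0 := by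
      by_cases hz : ((z : ℝ) : UnitAddCircle) ∈ ⋃ l, I l
      · rw [Set.indicator_of_mem hz]
        obtain ⟨l₀, hl₀⟩ := Set.mem_iUnion.1 hz
        rw [Finset.sum_eq_single l₀]
        · rw [if_pos ((hmem l₀ z).1 hl₀)]
        · intro l _ hne
          rw [if_neg]
          intro hcon
          have hzl : ((z : ℝ) : UnitAddCircle) ∈ I l := (hmem l z).2 hcon
          exact Set.disjoint_left.1 (hdisj hne) hzl hl₀
        · intro hcon
          exact absurd (Finset.mem_univ l₀) hcon
      · rw [Set.indicator_of_notMem hz]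
        symm
        refine Finset.sum_eq_zero fun l _ => ?_
        rw [if_neg]
        intro hcon
        exact hz (Set.mem_iUnion_of_mem l ((hmem l z).2 hcon))
    rw [hind]
    ring
  -- deviation bound
  obtain ⟨e, he0, he1, K, hK1, hdev⟩ :=
    deviation_bound α hα hirr hnl a β hβ0 hβ1 hβsum
  -- lift x
  obtain ⟨z₀, hz₀⟩ := QuotientAddGroup.mk_surjective x
  -- partial sums of f along the orbit
  set S : ℕ → ℝ := fun n => ∑ k ∈ Finset.Icc 1 n, f (x + k • (α : UnitAddCircle)) with hSdef
  have horb : ∀ k : ℕ, x + k • ((α : ℝ) : UnitAddCircle) = ((z₀ + k * α : ℝ) : UnitAddCircle) := by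
    intro k
    rw [← hz₀, ← AddCircle.coe_nsmul]
    show ((z₀ : ℝ) : UnitAddCircle) + ((k • α : ℝ) : UnitAddCircle) = _
    rw [← QuotientAddGroup.mk_add]
    norm_num [nsmul_eq_mul]
  have hSbound : ∀ n : ℕ, |S n| ≤ 2 * K * (n:ℝ) ^ e := by
    intro n
    have h1 : S n = 2 * ∑ j ∈ range n,
        ((∑ l, if Int.fract (z₀ + ((j:ℝ)+1) * α - a l) < β l then (1:ℝ) else 0) - 1/2) := by
      simp only [hSdef]
      have h2 : ∀ k ∈ Finset.Icc 1 n, f (x + k • ((α : ℝ) : UnitAddCircle))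
          = 2 * ((∑ l, if Int.fract (z₀ + (k:ℝ) * α - a l) < β l then (1:ℝ) else 0) - 1/2) := by
        intro k _
        rw [horb k, hfF (z₀ + k * α)]
      rw [Finset.sum_congr rfl h2, ← Finset.mul_sum]
      congr 1
      rw [sum_Icc_one_eq]
      refine Finset.sum_congr rfl fun j _ => ?_
      congr 1
      refine Finset.sum_congr rfl fun l _ => ?_
      rw [show ((j + 1 : ℕ) : ℝ) = (j:ℝ) + 1 from by push_cast; ring]
    rw [h1, abs_mul, abs_two]
    have := hdev n z₀
    calc 2 * |∑ j ∈ range n,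
        ((∑ l, if Int.fract (z₀ + ((j:ℝ)+1) * α - a l) < β l then (1:ℝ) else 0) - 1/2)|
        ≤ 2 * (K * (n:ℝ) ^ e) := by linarith
      _ = 2 * K * (n:ℝ) ^ e := by ring
  have hS0 : S 0 = 0 := by simp [hSdef]
  -- Abel summation identity
  have habel : ∀ N : ℕ, (∑ n ∈ Finset.Icc 1 N, f (x + n • ((α:ℝ) : UnitAddCircle)) * (1 / (n:ℝ)))
      = (∑ n ∈ Finset.Icc 1 N, S n * (1/(n:ℝ) - 1/((n:ℝ)+1))) + S N * (1/((N:ℝ)+1)) := by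
    intro N
    induction N with
    | zero => simp [hS0]
    | succ m ihm =>
      rw [Finset.sum_Icc_succ_top (by omega), Finset.sum_Icc_succ_top (by omega), ihm]
      have hSsucc : S (m+1) = S m + f (x + (m+1) • ((α:ℝ) : UnitAddCircle)) := by
        rw [hSdef]
        exact Finset.sum_Icc_succ_top (by omega) _
      rw [hSsucc]
      push_cast
      ring
  -- the series
  set t : ℕ → ℝ := fun n => S n * (1/(n:ℝ) - 1/((n:ℝ)+1)) with htdef
  have ht0 : t 0 = 0 := by simp [htdef, hS0]
  have hsummable : Summable t := by
    have hgs : Summable (fun n : ℕ => 2 * K * (1 / (n:ℝ) ^ ((2:ℝ) - e))) := by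
      exact (Real.summable_one_div_nat_rpow.2 (by linarith)).mul_left (2 * K)
    refine Summable.of_norm_bounded hgs ?_
    intro n
    rcases Nat.eq_zero_or_pos n with rfl | hn
    · rw [ht0]
      simp only [norm_zero]
      positivity
    · have hnR : (0:ℝ) < n := by exact_mod_cast hn
      have hn1 : (1:ℝ) ≤ n := by exact_mod_cast hn
      have hd : 1/(n:ℝ) - 1/((n:ℝ)+1) = 1/((n:ℝ)*((n:ℝ)+1)) := by
        field_simp
        ring
      have hd0 : (0:ℝ) ≤ 1/((n:ℝ)*((n:ℝ)+1)) := by positivity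
      rw [htdef]
      show ‖S n * (1/(n:ℝ) - 1/((n:ℝ)+1))‖ ≤ _
      rw [Real.norm_eq_abs, abs_mul, hd, abs_of_nonneg hd0]
      have h1 : |S n| * (1/((n:ℝ)*((n:ℝ)+1))) ≤ (2*K*(n:ℝ)^e) * (1/((n:ℝ)*((n:ℝ)+1))) :=
        mul_le_mul_of_nonneg_right (hSbound n) hd0
      have h2 : (2*K*(n:ℝ)^e) * (1/((n:ℝ)*((n:ℝ)+1))) ≤ (2*K*(n:ℝ)^e) * (1/((n:ℝ)*(n:ℝ))) := by
        apply mul_le_mul_of_nonneg_left ?_ (by positivity)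
        apply one_div_le_one_div_of_le (by positivity)
        nlinarith
      have h3 : (2*K*(n:ℝ)^e) * (1/((n:ℝ)*(n:ℝ))) = 2 * K * (1 / (n:ℝ) ^ ((2:ℝ) - e)) := by
        rw [Real.rpow_sub hnR]
        rw [show ((2:ℝ) : ℝ) = ((2:ℕ):ℝ) from by norm_num, Real.rpow_natCast]
        field_simp
      calc |S n| * (1/((n:ℝ)*((n:ℝ)+1))) ≤ (2*K*(n:ℝ)^e) * (1/((n:ℝ)*((n:ℝ)+1))) := h1
        _ ≤ (2*K*(n:ℝ)^e) * (1/((n:ℝ)*(n:ℝ))) := h2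
        _ = 2 * K * (1 / (n:ℝ) ^ ((2:ℝ) - e)) := h3
  have hL0 : Filter.Tendsto (fun N : ℕ => ∑ n ∈ Finset.Icc 1 N, t n)
      Filter.atTop (𝓝 (∑' n, t n)) := by
    have h1 : Filter.Tendsto (fun N : ℕ => ∑ n ∈ range N, t n)
        Filter.atTop (𝓝 (∑' n, t n)) := hsummable.hasSum.tendsto_sum_nat
    have h2 : Filter.Tendsto (fun N : ℕ => ∑ n ∈ range (N+1), t n)
        Filter.atTop (𝓝 (∑' n, t n)) := h1.comp (Filter.tendsto_add_atTop_nat 1)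
    refine h2.congr fun N => ?_
    exact (sum_Icc_eq_sum_range_succ t ht0 N).symm
  have hL1 : Filter.Tendsto (fun N : ℕ => S N * (1/((N:ℝ)+1))) Filter.atTop (𝓝 0) := by
    apply squeeze_zero_norm' (a := fun N : ℕ => 2 * K * (N:ℝ) ^ (-(1 - e)))
    · filter_upwards [Filter.eventually_ge_atTop 1] with N hN
      have hNR : (0:ℝ) < N := by exact_mod_cast hN
      have hNp1 : (0:ℝ) < (N:ℝ) + 1 := by linarith
      rw [Real.norm_eq_abs, abs_mul, abs_of_nonneg (by positivity : (0:ℝ) ≤ 1/((N:ℝ)+1))]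
      calc |S N| * (1/((N:ℝ)+1)) ≤ (2*K*(N:ℝ)^e) * (1/((N:ℝ)+1)) :=
            mul_le_mul_of_nonneg_right (hSbound N) (by positivity)
        _ ≤ (2*K*(N:ℝ)^e) * (1/(N:ℝ)) := by
            apply mul_le_mul_of_nonneg_left ?_ (by positivity)
            apply one_div_le_one_div_of_le hNR
            linarith
        _ = 2 * K * (N:ℝ) ^ (-(1 - e)) := by
            rw [neg_sub, Real.rpow_sub hNR, Real.rpow_one]
            field_simp
    · have h1 : Filter.Tendsto (fun y : ℝ => y ^ (-(1 - e))) Filter.atTop (𝓝 0) :=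
        tendsto_rpow_neg_atTop (by linarith)
      have h2 : Filter.Tendsto (fun N : ℕ => ((N:ℝ)) ^ (-(1 - e))) Filter.atTop (𝓝 0) :=
        h1.comp tendsto_natCast_atTop_atTop
      have h3 := h2.const_mul (2 * K)
      rw [mul_zero] at h3
      exact h3
  refine ⟨(∑' n, t n) + 0, ?_⟩
  have hfinal := hL0.add hL1
  refine hfinal.congr fun N => ?_
  exact (habel N).symm

/-- If `α ∈ (0,1)` is irrational and not Liouville, then the one-sided ergodic Hilbert
transform `Σ f(T^n x)·(1/n)` converges for every mean-zero indicator function `f` and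
every `x ∈ S¹`. -/
theorem converges_of_not_liouville (α : ℝ) (hα : α ∈ Set.Ioo (0 : ℝ) 1)
    (hirr : Irrational α) (hnl : ¬ Liouville α)
    (f : UnitAddCircle → ℝ) (hf : ∃ B : ℕ, IsMeanZeroIndicator B f)
    (x : UnitAddCircle) :
    ∃ L : ℝ,
      Tendsto (fun N : ℕ => ∑ n ∈ Finset.Icc 1 N,
          f (x + n • (α : UnitAddCircle)) * (1 / (n : ℝ)))
        atTop (𝓝 L) := by
  apply converges_of_not_liouville' α hα hirr hnl f ?_ x
  obtain ⟨B, hB⟩ := hf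
  obtain ⟨I, harc, hdisj, hvol, hfeq⟩ := hB
  exact ⟨B, I, fun l => harc l, hdisj, hvol, hfeq⟩
end
end
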